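/- arXiv:1912.02147 — 9 statements merged into one kernel-verified Lean document; each statement's English description precedes it below -/
import Mathlib

section
/- Let H be any graph, let u and v be distinct vertices of H, and let n be a natural number. If H contains n pairwise edge-disjoint u–v paths, then H also contains n pairwise edge-disjoint u–v paths that are pairwise order-compatible. -/
open SimpleGraph

/-- Two walks are edge-disjoint if they share no edge. -/
def WalkEdgeDisjoint {V : Type*} {G : SimpleGraph V} {u v : V}
    (p q : G.Walk u v) : Prop :=
  ∀ e, e ∈ p.edges → e ∉ q.edges

/-- Two lists (of supports of paths) traverse their common entries in the same order:
`x` comes no later than `y` in the first list iff the same holds in the second list. -/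
def ListCompat {α : Type*} [DecidableEq α] (l₁ l₂ : List α) : Prop :=
  ∀ x y, x ∈ l₁ → y ∈ l₁ → x ∈ l₂ → y ∈ l₂ →
    (l₁.idxOf x ≤ l₁.idxOf y ↔ l₂.idxOf x ≤ l₂.idxOf y)

lemma support_dropUntil_eq {V : Type*} [DecidableEq V] {G : SimpleGraph V}
    {a b : V} (p : G.Walk a b) (x : V) (h : x ∈ p.support) :
      (p.dropUntil x h).support = p.support.drop (p.support.idxOf x) := by
  induction p with
  | nil =>
    simp only [Walk.mem_support_nil_iff] at h
    subst h
    simp [Walk.dropUntil]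
  | @cons a c b r p ih =>
    by_cases hx : a = x
    · subst hx
      simp [Walk.dropUntil]
    · have hx' : x ∈ p.support := by
        cases h with
        | head => exact absurd rfl hx
        | tail _ h => exact h
      simp only [Walk.dropUntil, dif_neg hx]
      rw [ih hx']
      rw [Walk.support_cons, List.idxOf_cons_ne _ hx]
      simp

lemma indexOf_le_iff_mem_drop {α : Type*} [DecidableEq α] {l : List α} (hl : l.Nodup)
    {x y : α} (hx : x ∈ l) (hy : y ∈ l) :
    l.idxOf x ≤ l.idxOf y ↔ y ∈ l.drop (l.idxOf x) := by
  constructor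
  · intro h
    have hylt : l.idxOf y < l.length := List.idxOf_lt_length_iff.mpr hy
    rw [List.mem_iff_getElem]
    refine ⟨l.idxOf y - l.idxOf x, ?_, ?_⟩
    · rw [List.length_drop]; omega
    · rw [List.getElem_drop]
      have h2 : l.idxOf x + (l.idxOf y - l.idxOf x) = l.idxOf y := by omega
      simp_rw [h2]
      exact List.getElem_idxOf hylt
  · intro h
    rw [List.mem_iff_getElem] at h
    obtain ⟨i, hi, hget⟩ := h
    rw [List.length_drop] at hi
    rw [List.getElem_drop] at hget
    have hlt : l.idxOf x + i < l.length := by omega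
    have h3 : l.idxOf y = l.idxOf x + i := by
      rw [← hget]
      exact (List.Nodup.idxOf_getElem hl _ hlt)
    omega

lemma exchange {V : Type*} [DecidableEq V] {G : SimpleGraph V} {u v : V}
    {p q : G.Walk u v} (hp : p.IsPath) (hq : q.IsPath)
    (hdpq : WalkEdgeDisjoint p q) {x y : V}
    (hxp : x ∈ p.support) (hyq : y ∈ q.support) (hxy : x ≠ y)
    (hyp : y ∈ (p.dropUntil x hxp).support)
    (hxq : x ∈ (q.dropUntil y hyq).support) :
    ∃ p' q' : G.Walk u v, p'.IsPath ∧ q'.IsPath ∧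
      WalkEdgeDisjoint p' q' ∧
      (∀ e, e ∈ p'.edges → e ∈ p.edges ∨ e ∈ q.edges) ∧
      (∀ e, e ∈ q'.edges → e ∈ p.edges ∨ e ∈ q.edges) ∧
      p'.length + q'.length < p.length + q.length := by
  set p₁ := p.takeUntil x hxp with hp₁
  set p₂ := p.dropUntil x hxp with hp₂
  set q₁ := q.takeUntil y hyq with hq₁
  set q₂ := q.dropUntil y hyq with hq₂
  set q₃ := q₂.dropUntil x hxq with hq₃
  set p₃ := p₂.dropUntil y hyp with hp₃
  refine ⟨(p₁.append q₃).bypass, (q₁.append p₃).bypass,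
    Walk.bypass_isPath _, Walk.bypass_isPath _, ?_, ?_, ?_, ?_⟩
  · -- edge disjointness
    intro e he he'
    have he1 : e ∈ p₁.edges ∨ e ∈ q₃.edges := by
      have := Walk.edges_bypass_subset _ he
      rw [Walk.edges_append] at this
      exact List.mem_append.mp this
    have he2 : e ∈ q₁.edges ∨ e ∈ p₃.edges := by
      have := Walk.edges_bypass_subset _ he'
      rw [Walk.edges_append] at this
      exact List.mem_append.mp this
    have hpe : p.edges = p₁.edges ++ p₂.edges := by
      conv_lhs => rw [← p.take_spec hxp]
      rw [Walk.edges_append]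
    have hqe : q.edges = q₁.edges ++ q₂.edges := by
      conv_lhs => rw [← q.take_spec hyq]
      rw [Walk.edges_append]
    have hpdisj : ∀ e, e ∈ p₁.edges → e ∉ p₂.edges := by
      have hnd : p.edges.Nodup := Walk.edges_nodup_of_support_nodup hp.support_nodup
      rw [hpe, List.nodup_append] at hnd
      exact fun e h1 h2 => hnd.2.2 e h1 e h2 rfl
    have hqdisj : ∀ e, e ∈ q₁.edges → e ∉ q₂.edges := by
      have hnd : q.edges.Nodup := Walk.edges_nodup_of_support_nodup hq.support_nodup
      rw [hqe, List.nodup_append] at hnd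
      exact fun e h1 h2 => hnd.2.2 e h1 e h2 rfl
    have hq3 : ∀ e, e ∈ q₃.edges → e ∈ q₂.edges := fun e h => Walk.edges_dropUntil_subset _ _ h
    have hp3 : ∀ e, e ∈ p₃.edges → e ∈ p₂.edges := fun e h => Walk.edges_dropUntil_subset _ _ h
    rcases he1 with h1 | h1 <;> rcases he2 with h2 | h2
    · exact hdpq e (Walk.edges_takeUntil_subset _ _ h1)
        (hqe ▸ List.mem_append_left _ h2)
    · exact hpdisj e h1 (hp3 e h2)
    · exact hqdisj e h2 (hq3 e h1)
    · exact hdpq e (hpe ▸ List.mem_append_right _ (hp3 e h2))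
        (hqe ▸ List.mem_append_right _ (hq3 e h1))
  · intro e he
    have := Walk.edges_bypass_subset _ he
    rw [Walk.edges_append] at this
    rcases List.mem_append.mp this with h | h
    · exact Or.inl (Walk.edges_takeUntil_subset _ _ h)
    · exact Or.inr (Walk.edges_dropUntil_subset _ _
        (Walk.edges_dropUntil_subset _ _ h))
  · intro e he
    have := Walk.edges_bypass_subset _ he
    rw [Walk.edges_append] at this
    rcases List.mem_append.mp this with h | h
    · exact Or.inr (Walk.edges_takeUntil_subset _ _ h)
    · exact Or.inl (Walk.edges_dropUntil_subset _ _
        (Walk.edges_dropUntil_subset _ _ h))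
  · -- length
    have hL1 : ((p₁.append q₃).bypass).length ≤ p₁.length + q₃.length := by
      calc _ ≤ (p₁.append q₃).length := Walk.length_bypass_le _
        _ = p₁.length + q₃.length := Walk.length_append _ _
    have hL2 : ((q₁.append p₃).bypass).length ≤ q₁.length + p₃.length := by
      calc _ ≤ (q₁.append p₃).length := Walk.length_bypass_le _
        _ = q₁.length + p₃.length := Walk.length_append _ _
    have hpl : p.length = p₁.length + p₂.length := by
      conv_lhs => rw [← p.take_spec hxp]
      rw [Walk.length_append]
    have hql : q.length = q₁.length + q₂.length := by
      conv_lhs => rw [← q.take_spec hyq]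
      rw [Walk.length_append]
    have hp2l : p₂.length = (p₂.takeUntil y hyp).length + p₃.length := by
      conv_lhs => rw [← p₂.take_spec hyp]
      rw [Walk.length_append]
    have hq2l : q₂.length = (q₂.takeUntil x hxq).length + q₃.length := by
      conv_lhs => rw [← q₂.take_spec hxq]
      rw [Walk.length_append]
    have hpos : 0 < (q₂.takeUntil x hxq).length := by
      rcases Nat.eq_zero_or_pos (q₂.takeUntil x hxq).length with h | h
      · exact absurd (Walk.eq_of_length_eq_zero h) hxy.symm
      · exact h
    omega

lemma before_iff {V : Type*} [DecidableEq V] {G : SimpleGraph V}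
    {a b : V} {p : G.Walk a b} (hp : p.IsPath) {x y : V}
    (hx : x ∈ p.support) (hy : y ∈ p.support) :
    p.support.idxOf x ≤ p.support.idxOf y ↔ y ∈ (p.dropUntil x hx).support := by
  rw [support_dropUntil_eq p x hx]
  exact indexOf_le_iff_mem_drop hp.support_nodup hx hy

theorem key {V : Type*} [DecidableEq V] (H : SimpleGraph V) (u v : V)
    (n : ℕ) : ∀ (s : ℕ) (P : Fin n → H.Walk u v), (∑ i, (P i).length) = s →
    (∀ i, (P i).IsPath) →
    (∀ i j, i ≠ j → WalkEdgeDisjoint (P i) (P j)) →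
    ∃ Q : Fin n → H.Walk u v, (∀ i, (Q i).IsPath) ∧
      (∀ i j, i ≠ j → WalkEdgeDisjoint (Q i) (Q j)) ∧
      (∀ i j, ListCompat (Q i).support (Q j).support) := by
  intro s
  induction s using Nat.strong_induction_on with
  | _ s ih =>
  intro P hs hP hdisj
  by_cases hc : ∀ i j, ListCompat (P i).support (P j).support
  · exact ⟨P, hP, hdisj, hc⟩
  push_neg at hc
  obtain ⟨i, j, hij⟩ := hc
  rw [ListCompat] at hij
  push_neg at hij
  obtain ⟨x, y, hxi, hyi, hxj, hyj, hiff⟩ := hij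
  have hij' : i ≠ j := by
    rintro rfl
    rcases hiff with ⟨h1, h2⟩ | ⟨h1, h2⟩ <;> omega
  -- produce the exchange configuration
  have hmain : ∃ (X Y : V) (hXi : X ∈ (P i).support) (hYj : Y ∈ (P j).support),
      X ≠ Y ∧ Y ∈ ((P i).dropUntil X hXi).support ∧
      X ∈ ((P j).dropUntil Y hYj).support := by
    rcases hiff with ⟨h1, h2⟩ | ⟨h1, h2⟩
    · refine ⟨x, y, hxi, hyj, ?_, ?_, ?_⟩
      · rintro rfl; omega
      · exact (before_iff (hP i) hxi hyi).mp h1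
      · exact (before_iff (hP j) hyj hxj).mp (le_of_lt h2)
    · refine ⟨y, x, hyi, hxj, ?_, ?_, ?_⟩
      · rintro rfl; omega
      · exact (before_iff (hP i) hyi hxi).mp (le_of_lt h1)
      · exact (before_iff (hP j) hxj hyj).mp h2
  obtain ⟨X, Y, hXi, hYj, hXY, hd1, hd2⟩ := hmain
  obtain ⟨p', q', hp', hq', hd', hsub1, hsub2, hlen⟩ :=
    exchange (hP i) (hP j) (hdisj i j hij') hXi hYj hXY hd1 hd2
  set P' : Fin n → H.Walk u v := Function.update (Function.update P i p') j q' with hP'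
  have hP'i : P' i = p' := by
    rw [hP', Function.update_of_ne hij', Function.update_self]
  have hP'j : P' j = q' := by rw [hP', Function.update_self]
  have hP'k : ∀ k, k ≠ i → k ≠ j → P' k = P k := fun k hki hkj => by
    rw [hP', Function.update_of_ne hkj, Function.update_of_ne hki]
  have hsum : (∑ k, (P' k).length) < s := by
    have h1 : (∑ k, (P' k).length) =
        (P' j).length + ∑ k ∈ Finset.univ.erase j, (P' k).length :=
      (Finset.add_sum_erase _ _ (Finset.mem_univ j)).symm
    have h2 : ∑ k ∈ Finset.univ.erase j, (P' k).length =
        (P' i).length + ∑ k ∈ (Finset.univ.erase j).erase i, (P' k).length :=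
      (Finset.add_sum_erase _ _ (Finset.mem_erase.mpr ⟨hij', Finset.mem_univ i⟩)).symm
    have h1' : (∑ k, (P k).length) =
        (P j).length + ∑ k ∈ Finset.univ.erase j, (P k).length :=
      (Finset.add_sum_erase _ _ (Finset.mem_univ j)).symm
    have h2' : ∑ k ∈ Finset.univ.erase j, (P k).length =
        (P i).length + ∑ k ∈ (Finset.univ.erase j).erase i, (P k).length :=
      (Finset.add_sum_erase _ _ (Finset.mem_erase.mpr ⟨hij', Finset.mem_univ i⟩)).symm
    have heq : ∑ k ∈ (Finset.univ.erase j).erase i, (P' k).length =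
        ∑ k ∈ (Finset.univ.erase j).erase i, (P k).length := by
      apply Finset.sum_congr rfl
      intro k hk
      rw [Finset.mem_erase, Finset.mem_erase] at hk
      rw [hP'k k hk.1 hk.2.1]
    rw [h1, h2, heq, hP'i, hP'j]
    rw [h1', h2'] at hs
    omega
  apply ih _ hsum P' rfl
  · intro k
    by_cases hki : k = i
    · subst hki; rw [hP'i]; exact hp'
    by_cases hkj : k = j
    · subst hkj; rw [hP'j]; exact hq'
    · rw [hP'k k hki hkj]; exact hP k
  · intro a b hab e hea heb
    rcases eq_or_ne a i with rfl | hai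
    · rcases eq_or_ne b j with rfl | hbj
      · rw [hP'i] at hea; rw [hP'j] at heb
        exact hd' e hea heb
      · rw [hP'i] at hea; rw [hP'k b (Ne.symm hab) hbj] at heb
        rcases hsub1 e hea with h | h
        · exact hdisj a b hab e h heb
        · exact hdisj j b (Ne.symm hbj) e h heb
    · rcases eq_or_ne a j with rfl | haj
      · rcases eq_or_ne b i with rfl | hbi
        · rw [hP'j] at hea; rw [hP'i] at heb
          exact hd' e heb hea
        · rw [hP'j] at hea; rw [hP'k b hbi (Ne.symm hab)] at heb
          rcases hsub2 e hea with h | h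
          · exact hdisj i b (Ne.symm hbi) e h heb
          · exact hdisj a b hab e h heb
      · rw [hP'k a hai haj] at hea
        rcases eq_or_ne b i with rfl | hbi
        · rw [hP'i] at heb
          rcases hsub1 e heb with h | h
          · exact hdisj b a (Ne.symm hai) e h hea
          · exact hdisj j a (Ne.symm haj) e h hea
        · rcases eq_or_ne b j with rfl | hbj
          · rw [hP'j] at heb
            rcases hsub2 e heb with h | h
            · exact hdisj i a (Ne.symm hai) e h hea
            · exact hdisj b a (Ne.symm haj) e h hea
          · rw [hP'k b hbi hbj] at heb
            exact hdisj a b hab e hea heb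

/-- If a graph `H` contains `n` pairwise edge-disjoint `u`–`v` paths, then it contains
`n` pairwise edge-disjoint, pairwise order-compatible `u`–`v` paths. -/
theorem stmt0 {V : Type*} [DecidableEq V] (H : SimpleGraph V) (u v : V) (huv : u ≠ v)
    (n : ℕ) (P : Fin n → H.Walk u v) (hP : ∀ i, (P i).IsPath)
    (hdisj : ∀ i j, i ≠ j → WalkEdgeDisjoint (P i) (P j)) :
    ∃ Q : Fin n → H.Walk u v, (∀ i, (Q i).IsPath) ∧
      (∀ i j, i ≠ j → WalkEdgeDisjoint (Q i) (Q j)) ∧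
      (∀ i j, ListCompat (Q i).support (Q j).support) := by
  exact key H u v n (∑ i, (P i).length) P rfl hP hdisj
end

section
/- Let P and Q be two u–v paths in a graph H that are not order-compatible, witnessed by vertices x, y common to both paths with x preceding y on P and y preceding x on Q. Then there exist two edge-disjoint u–v paths P' and Q' contained in P ∪ Q such that the edge sets of P' and Q' are both contained in E(P) ∪ E(Q) but avoid all edges of the segment of P from x to y and all edges of the segment of Q from y to x. -/
open SimpleGraph

lemma take_drop_disj {V : Type*} [DecidableEq V] {G : SimpleGraph V} {u v w : V}
    (p : G.Walk u v) (hp : p.edges.Nodup) (h : w ∈ p.support) :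
    ∀ e ∈ (p.takeUntil w h).edges, e ∉ (p.dropUntil w h).edges := by
  have hs := p.take_spec h
  rw [← hs, SimpleGraph.Walk.edges_append, List.nodup_append] at hp
  exact fun e he he2 => hp.2.2 e he e he2 rfl

/-- If `P` and `Q` are edge-disjoint `u`–`v` paths that are not order-compatible, witnessed
by common vertices `x ≠ y` with `x` preceding `y` on `P` (i.e. `y` lies on the part of `P`
after `x`) and `y` preceding `x` on `Q`, then there are two edge-disjoint `u`–`v` paths
`P'`, `Q'` whose edges lie in `E(P) ∪ E(Q)` but avoid all edges of `xPy` and of `yQx`. -/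
theorem stmt1 {V : Type*} [DecidableEq V] (H : SimpleGraph V) (u v : V)
    (P Q : H.Walk u v) (hP : P.IsPath) (hQ : Q.IsPath)
    (hPQ : WalkEdgeDisjoint P Q)
    (x y : V) (hxy : x ≠ y) (hxP : x ∈ P.support) (hyQ : y ∈ Q.support)
    (hyP : y ∈ (P.dropUntil x hxP).support)
    (hxQ : x ∈ (Q.dropUntil y hyQ).support) :
    ∃ P' Q' : H.Walk u v, P'.IsPath ∧ Q'.IsPath ∧ WalkEdgeDisjoint P' Q' ∧
      (∀ e ∈ P'.edges, (e ∈ P.edges ∨ e ∈ Q.edges) ∧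
        e ∉ ((P.dropUntil x hxP).takeUntil y hyP).edges ∧
        e ∉ ((Q.dropUntil y hyQ).takeUntil x hxQ).edges) ∧
      (∀ e ∈ Q'.edges, (e ∈ P.edges ∨ e ∈ Q.edges) ∧
        e ∉ ((P.dropUntil x hxP).takeUntil y hyP).edges ∧
        e ∉ ((Q.dropUntil y hyQ).takeUntil x hxQ).edges) := by
  classical
  set P1 := P.takeUntil x hxP with hP1
  set P2 := P.dropUntil x hxP with hP2
  set Q1 := Q.takeUntil y hyQ with hQ1
  set Q2 := Q.dropUntil y hyQ with hQ2
  set Pxy := P2.takeUntil y hyP with hPxy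
  set P2b := P2.dropUntil y hyP with hP2b
  set Qyx := Q2.takeUntil x hxQ with hQyx
  set Q2b := Q2.dropUntil x hxQ with hQ2b
  -- basic edge inclusions
  have hP1P : ∀ e ∈ P1.edges, e ∈ P.edges := fun e he => P.edges_takeUntil_subset hxP he
  have hP2P : ∀ e ∈ P2.edges, e ∈ P.edges := fun e he => P.edges_dropUntil_subset hxP he
  have hQ1Q : ∀ e ∈ Q1.edges, e ∈ Q.edges := fun e he => Q.edges_takeUntil_subset hyQ he
  have hQ2Q : ∀ e ∈ Q2.edges, e ∈ Q.edges := fun e he => Q.edges_dropUntil_subset hyQ he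
  have hPxyP2 : ∀ e ∈ Pxy.edges, e ∈ P2.edges := fun e he => P2.edges_takeUntil_subset hyP he
  have hP2bP2 : ∀ e ∈ P2b.edges, e ∈ P2.edges := fun e he => P2.edges_dropUntil_subset hyP he
  have hQyxQ2 : ∀ e ∈ Qyx.edges, e ∈ Q2.edges := fun e he => Q2.edges_takeUntil_subset hxQ he
  have hQ2bQ2 : ∀ e ∈ Q2b.edges, e ∈ Q2.edges := fun e he => Q2.edges_dropUntil_subset hxQ he
  -- disjointness facts
  have hPdisj := take_drop_disj P hP.edges_nodup hxP
  have hQdisj := take_drop_disj Q hQ.edges_nodup hyQ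
  have hP2path : P2.IsPath := hP.dropUntil hxP
  have hQ2path : Q2.IsPath := hQ.dropUntil hyQ
  have hP2disj := take_drop_disj P2 hP2path.edges_nodup hyP
  have hQ2disj := take_drop_disj Q2 hQ2path.edges_nodup hxQ
  -- the two walks
  set W1 : H.Walk u v := P1.append Q2b with hW1
  set W2 : H.Walk u v := Q1.append P2b with hW2
  have hW1e : ∀ e ∈ W1.edges, e ∈ P1.edges ∨ e ∈ Q2b.edges := by
    intro e he
    rw [hW1, SimpleGraph.Walk.edges_append, List.mem_append] at he
    exact he
  have hW2e : ∀ e ∈ W2.edges, e ∈ Q1.edges ∨ e ∈ P2b.edges := by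
    intro e he
    rw [hW2, SimpleGraph.Walk.edges_append, List.mem_append] at he
    exact he
  refine ⟨W1.toPath, W2.toPath, W1.toPath.2, W2.toPath.2, ?_, ?_, ?_⟩
  · -- edge disjointness
    intro e he1 he2
    have h1 := hW1e e (W1.edges_bypass_subset he1)
    have h2 := hW2e e (W2.edges_bypass_subset he2)
    rcases h1 with h1 | h1 <;> rcases h2 with h2 | h2
    · exact hPQ e (hP1P e h1) (hQ1Q e h2)
    · exact hPdisj e h1 (hP2bP2 e h2)
    · exact hQdisj e h2 (hQ2bQ2 e h1)
    · exact hPQ e (hP2P e (hP2bP2 e h2)) (hQ2Q e (hQ2bQ2 e h1))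
  · intro e he
    have h1 := hW1e e (W1.edges_bypass_subset he)
    rcases h1 with h1 | h1
    · refine ⟨Or.inl (hP1P e h1), ?_, ?_⟩
      · intro hc; exact hPdisj e h1 (hPxyP2 e hc)
      · intro hc; exact hPQ e (hP1P e h1) (hQ2Q e (hQyxQ2 e hc))
    · refine ⟨Or.inr (hQ2Q e (hQ2bQ2 e h1)), ?_, ?_⟩
      · intro hc; exact hPQ e (hP2P e (hPxyP2 e hc)) (hQ2Q e (hQ2bQ2 e h1))
      · intro hc; exact hQ2disj e hc h1
  · intro e he
    have h2 := hW2e e (W2.edges_bypass_subset he)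
    rcases h2 with h2 | h2
    · refine ⟨Or.inr (hQ1Q e h2), ?_, ?_⟩
      · intro hc; exact hPQ e (hP2P e (hPxyP2 e hc)) (hQ1Q e h2)
      · intro hc; exact hQdisj e h2 (hQyxQ2 e hc)
    · refine ⟨Or.inl (hP2P e (hP2bP2 e h2)), ?_, ?_⟩
      · intro hc; exact hP2disj e hc h2
      · intro hc; exact hPQ e (hP2P e (hP2bP2 e h2)) (hQ2Q e (hQyxQ2 e hc))
end

section
/- In a minimum-edge system of n pairwise edge-disjoint u–v paths in a graph H (i.e., a family of n edge-disjoint u–v paths using as few edges of H in total as possible), the paths are pairwise order-compatible. -/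
open SimpleGraph

section Aux

variable {V : Type*} [DecidableEq V] {G : SimpleGraph V}

/-- Support of a walk splits along `takeUntil`/`dropUntil`. -/
lemma support_split {u v b : V} (p : G.Walk u v) (hb : b ∈ p.support) :
    p.support = (p.takeUntil b hb).support ++ (p.dropUntil b hb).support.tail := by
  rw [← SimpleGraph.Walk.support_append, SimpleGraph.Walk.take_spec]

/-- If `a` occurs strictly before `b` in a walk's support, then `a` lies in the
initial segment `takeUntil b`. -/
lemma mem_takeUntil_of_indexOf_lt {u v a b : V} {p : G.Walk u v}
    (hb : b ∈ p.support)
    (hlt : p.support.idxOf a < p.support.idxOf b) :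
    a ∈ (p.takeUntil b hb).support := by
  by_contra hA
  have h1 : (p.takeUntil b hb).support.length ≤ p.support.idxOf a := by
    rw [support_split p hb, List.idxOf_append_of_notMem hA]
    exact Nat.le_add_right _ _
  have h2 : p.support.idxOf b < (p.takeUntil b hb).support.length := by
    rw [support_split p hb,
      List.idxOf_append_of_mem (SimpleGraph.Walk.end_mem_support _)]
    exact List.idxOf_lt_length_iff.2 (SimpleGraph.Walk.end_mem_support _)
  omega

/-- If `a` occurs strictly after `b` in a path's support, then `a` does not lie
in the initial segment `takeUntil b`. -/
lemma not_mem_takeUntil_of_indexOf_lt {u v a b : V} {p : G.Walk u v} (hp : p.IsPath)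
    (hb : b ∈ p.support)
    (hlt : p.support.idxOf b < p.support.idxOf a) :
    a ∉ (p.takeUntil b hb).support := by
  intro haT
  have hab : a ≠ b := by
    intro h; subst h; omega
  have hnd1 : (p.takeUntil b hb).support.Nodup := (hp.takeUntil hb).support_nodup
  have hne : (p.takeUntil b hb).support ≠ [] := SimpleGraph.Walk.support_ne_nil _
  obtain ⟨D, hD⟩ : ∃ D, (p.takeUntil b hb).support = D ++ [b] := by
    refine ⟨(p.takeUntil b hb).support.dropLast, ?_⟩
    have h := List.dropLast_append_getLast hne
    rwa [show (p.takeUntil b hb).support.getLast hne = b from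
      SimpleGraph.Walk.getLast_support _, eq_comm] at h
  have haD : a ∈ D := by
    have h : a ∈ D ++ [b] := hD ▸ haT
    rcases List.mem_append.1 h with h | h
    · exact h
    · exact absurd (by simpa using h) hab
  have hbD : b ∉ D := by
    intro hm
    have h := hnd1
    rw [hD] at h
    exact (List.disjoint_of_nodup_append h) hm (by simp)
  have hia : p.support.idxOf a < D.length := by
    rw [support_split p hb, List.idxOf_append_of_mem haT, hD,
      List.idxOf_append_of_mem haD]
    exact List.idxOf_lt_length_iff.2 haD
  have hib : D.length ≤ p.support.idxOf b := by
    rw [support_split p hb,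
      List.idxOf_append_of_mem (SimpleGraph.Walk.end_mem_support _), hD,
      List.idxOf_append_of_notMem hbD]
    exact Nat.le_add_right _ _
  omega

/-- The exchange construction: two edge-disjoint paths that traverse two common
vertices in opposite orders can be replaced by two edge-disjoint walks on a subset
of their edges with strictly smaller total length. -/
lemma exchange_s2 {u v a b : V} {p q : G.Walk u v} (hp : p.IsPath) (hq : q.IsPath)
    (hdis : ∀ e, e ∈ p.edges → e ∉ q.edges)
    (hbp : b ∈ p.support)
    (haq : a ∈ q.support) (hbq : b ∈ q.support)
    (h1 : p.support.idxOf a < p.support.idxOf b)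
    (h2 : q.support.idxOf b < q.support.idxOf a) :
    ∃ w₁ w₂ : G.Walk u v,
      (∀ e ∈ w₁.edges, e ∈ p.edges ∨ e ∈ q.edges) ∧
      (∀ e ∈ w₂.edges, e ∈ p.edges ∨ e ∈ q.edges) ∧
      (∀ e, e ∈ w₁.edges → e ∉ w₂.edges) ∧
      w₁.length + w₂.length < p.length + q.length := by
  have hab : a ≠ b := fun h => by subst h; omega
  set p₁ := p.takeUntil b hbp with hp₁
  set p₂ := p.dropUntil b hbp with hp₂
  set q₁ := q.takeUntil b hbq with hq₁
  set q₂ := q.dropUntil b hbq with hq₂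
  have haP1 : a ∈ p₁.support := mem_takeUntil_of_indexOf_lt hbp h1
  have haQ2 : a ∈ q₂.support := by
    have hnot : a ∉ q₁.support := not_mem_takeUntil_of_indexOf_lt hq hbq h2
    have h := haq
    rw [← SimpleGraph.Walk.take_spec q hbq, SimpleGraph.Walk.mem_support_append_iff] at h
    exact h.resolve_left hnot
  set p₀ := p₁.takeUntil a haP1 with hp₀
  set q₃ := q₂.dropUntil a haQ2 with hq₃
  have hpe : p.edges = p₁.edges ++ p₂.edges := by
    rw [← SimpleGraph.Walk.edges_append, SimpleGraph.Walk.take_spec]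
  have hqe : q.edges = q₁.edges ++ q₂.edges := by
    rw [← SimpleGraph.Walk.edges_append, SimpleGraph.Walk.take_spec]
  have hp0sub : p₀.edges ⊆ p₁.edges := SimpleGraph.Walk.edges_takeUntil_subset _ _
  have hq3sub : q₃.edges ⊆ q₂.edges := SimpleGraph.Walk.edges_dropUntil_subset _ _
  have hp1p : p₁.edges ⊆ p.edges := SimpleGraph.Walk.edges_takeUntil_subset _ _
  have hp2p : p₂.edges ⊆ p.edges := SimpleGraph.Walk.edges_dropUntil_subset _ _
  have hq1q : q₁.edges ⊆ q.edges := SimpleGraph.Walk.edges_takeUntil_subset _ _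
  have hq2q : q₂.edges ⊆ q.edges := SimpleGraph.Walk.edges_dropUntil_subset _ _
  have hpdisj : List.Disjoint p₁.edges p₂.edges := by
    have h := hp.isTrail.edges_nodup
    rw [hpe] at h
    exact List.disjoint_of_nodup_append h
  have hqdisj : List.Disjoint q₁.edges q₂.edges := by
    have h := hq.isTrail.edges_nodup
    rw [hqe] at h
    exact List.disjoint_of_nodup_append h
  refine ⟨p₀.append q₃, q₁.append p₂, ?_, ?_, ?_, ?_⟩
  · intro e he
    rw [SimpleGraph.Walk.edges_append, List.mem_append] at he
    rcases he with he | he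
    · exact Or.inl (hp1p (hp0sub he))
    · exact Or.inr (hq2q (hq3sub he))
  · intro e he
    rw [SimpleGraph.Walk.edges_append, List.mem_append] at he
    rcases he with he | he
    · exact Or.inr (hq1q he)
    · exact Or.inl (hp2p he)
  · intro e he he'
    rw [SimpleGraph.Walk.edges_append, List.mem_append] at he he'
    rcases he with he | he <;> rcases he' with he' | he'
    · exact hdis e (hp1p (hp0sub he)) (hq1q he')
    · exact hpdisj (hp0sub he) he'
    · exact hqdisj he' (hq3sub he)
    · exact hdis e (hp2p he') (hq2q (hq3sub he))
  · have hplen : p.length = p₁.length + p₂.length := by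
      conv_lhs => rw [← SimpleGraph.Walk.take_spec p hbp]
      rw [SimpleGraph.Walk.length_append]
    have hqlen : q.length = q₁.length + q₂.length := by
      conv_lhs => rw [← SimpleGraph.Walk.take_spec q hbq]
      rw [SimpleGraph.Walk.length_append]
    have hp0le : p₀.length ≤ p₁.length := SimpleGraph.Walk.length_takeUntil_le _ _
    have hq3lt : q₃.length < q₂.length := by
      have hsplit : q₂.length = (q₂.takeUntil a haQ2).length + q₃.length := by
        conv_lhs => rw [← SimpleGraph.Walk.take_spec q₂ haQ2]
        rw [SimpleGraph.Walk.length_append]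
      have hpos : (q₂.takeUntil a haQ2).length ≠ 0 := by
        intro h
        exact hab (SimpleGraph.Walk.eq_of_length_eq_zero h).symm
      omega
    rw [SimpleGraph.Walk.length_append, SimpleGraph.Walk.length_append]
    omega

end Aux

/-- In a system of `n` pairwise edge-disjoint `u`–`v` paths using as few edges in total as
possible among all such systems, the paths are pairwise order-compatible. -/
theorem stmt2 {V : Type*} [DecidableEq V] (H : SimpleGraph V) (u v : V) (n : ℕ)
    (P : Fin n → H.Walk u v) (hP : ∀ i, (P i).IsPath)
    (hdisj : ∀ i j, i ≠ j → WalkEdgeDisjoint (P i) (P j))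
    (hmin : ∀ Q : Fin n → H.Walk u v, (∀ i, (Q i).IsPath) →
      (∀ i j, i ≠ j → WalkEdgeDisjoint (Q i) (Q j)) →
      (∑ i, (P i).edges.length) ≤ (∑ i, (Q i).edges.length)) :
    ∀ i j, ListCompat (P i).support (P j).support := by
  intro i j
  by_cases hij : i = j
  · subst hij; exact fun x y _ _ _ _ => Iff.rfl
  by_contra hC
  simp only [ListCompat, not_forall] at hC
  obtain ⟨x, y, hx1, hy1, hx2, hy2, hiff⟩ := hC
  have hji : j ≠ i := fun h => hij h.symm
  -- extract a pair of vertices traversed in opposite orders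
  have hconfig : ∃ a b, b ∈ (P i).support ∧
      a ∈ (P j).support ∧ b ∈ (P j).support ∧
      (P i).support.idxOf a < (P i).support.idxOf b ∧
      (P j).support.idxOf b < (P j).support.idxOf a := by
    by_cases hA : (P i).support.idxOf x ≤ (P i).support.idxOf y
    · have hB : ¬ (P j).support.idxOf x ≤ (P j).support.idxOf y :=
        fun hB => hiff ⟨fun _ => hB, fun _ => hA⟩
      have hxy : x ≠ y := by
        rintro rfl; exact hB le_rfl
      have hA' : (P i).support.idxOf x < (P i).support.idxOf y :=
        lt_of_le_of_ne hA (fun h => hxy ((List.idxOf_inj hx1).1 h))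
      exact ⟨x, y, hy1, hx2, hy2, hA', not_le.1 hB⟩
    · have hB : (P j).support.idxOf x ≤ (P j).support.idxOf y := by
        by_contra hB
        exact hiff ⟨fun h => absurd h hA, fun h => absurd h hB⟩
      have hxy : x ≠ y := by
        rintro rfl; exact hA le_rfl
      have hB' : (P j).support.idxOf x < (P j).support.idxOf y :=
        lt_of_le_of_ne hB (fun h => hxy ((List.idxOf_inj hx2).1 h))
      exact ⟨y, x, hx1, hy2, hx2, not_le.1 hA, hB'⟩
  obtain ⟨a, b, hbp, haq, hbq, h1, h2⟩ := hconfig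
  obtain ⟨w₁, w₂, hw₁, hw₂, hw12, hlen⟩ :=
    exchange_s2 (hP i) (hP j) (hdisj i j hij) hbp haq hbq h1 h2
  -- build the improved system
  set Q : Fin n → H.Walk u v :=
    fun k => if k = i then w₁.bypass else if k = j then w₂.bypass else P k with hQ
  have hQi : Q i = w₁.bypass := by simp [hQ]
  have hQj : Q j = w₂.bypass := by simp [hQ, hji]
  have hQk : ∀ k, k ≠ i → k ≠ j → Q k = P k := by
    intro k hk1 hk2; simp [hQ, hk1, hk2]
  have hQpath : ∀ k, (Q k).IsPath := by
    intro k
    by_cases hk1 : k = i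
    · rw [hk1, hQi]; exact SimpleGraph.Walk.bypass_isPath _
    by_cases hk2 : k = j
    · rw [hk2, hQj]; exact SimpleGraph.Walk.bypass_isPath _
    · rw [hQk k hk1 hk2]; exact hP k
  have hw₁sub : ∀ e ∈ (Q i).edges, e ∈ (P i).edges ∨ e ∈ (P j).edges := by
    intro e he; rw [hQi] at he
    exact hw₁ e (SimpleGraph.Walk.edges_bypass_subset _ he)
  have hw₂sub : ∀ e ∈ (Q j).edges, e ∈ (P i).edges ∨ e ∈ (P j).edges := by
    intro e he; rw [hQj] at he
    exact hw₂ e (SimpleGraph.Walk.edges_bypass_subset _ he)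
  have hQdisj : ∀ k l, k ≠ l → WalkEdgeDisjoint (Q k) (Q l) := by
    intro k l hkl e hek hel
    by_cases hk1 : k = i
    · rw [hk1] at hek
      by_cases hl2 : l = j
      · rw [hl2, hQj] at hel; rw [hQi] at hek
        exact hw12 e (SimpleGraph.Walk.edges_bypass_subset _ hek)
          (SimpleGraph.Walk.edges_bypass_subset _ hel)
      · have hli : l ≠ i := by rw [← hk1]; exact Ne.symm hkl
        rw [hQk l hli hl2] at hel
        rcases hw₁sub e hek with h | h
        · exact hdisj i l (Ne.symm hli) e h hel
        · exact hdisj j l (fun hh => hl2 hh.symm) e h hel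
    by_cases hk2 : k = j
    · rw [hk2] at hek
      by_cases hl1 : l = i
      · rw [hl1, hQi] at hel; rw [hQj] at hek
        exact hw12 e (SimpleGraph.Walk.edges_bypass_subset _ hel)
          (SimpleGraph.Walk.edges_bypass_subset _ hek)
      · have hlj : l ≠ j := by rw [← hk2]; exact Ne.symm hkl
        rw [hQk l hl1 hlj] at hel
        rcases hw₂sub e hek with h | h
        · exact hdisj i l (fun hh => hl1 hh.symm) e h hel
        · exact hdisj j l (Ne.symm hlj) e h hel
    · rw [hQk k hk1 hk2] at hek
      by_cases hl1 : l = i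
      · rw [hl1] at hel
        rcases hw₁sub e hel with h | h
        · exact hdisj i k (fun hh => hk1 hh.symm) e h hek
        · exact hdisj j k (fun hh => hk2 hh.symm) e h hek
      by_cases hl2 : l = j
      · rw [hl2] at hel
        rcases hw₂sub e hel with h | h
        · exact hdisj i k (fun hh => hk1 hh.symm) e h hek
        · exact hdisj j k (fun hh => hk2 hh.symm) e h hek
      · rw [hQk l hl1 hl2] at hel
        exact hdisj k l hkl e hek hel
  have hsum := hmin Q hQpath hQdisj
  -- compute the sums
  have hjmem : j ∈ (Finset.univ.erase i) := Finset.mem_erase.2 ⟨hji, Finset.mem_univ j⟩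
  have hrest : ∀ k ∈ (Finset.univ.erase i).erase j, (Q k).edges.length = (P k).edges.length := by
    intro k hk
    rw [Finset.mem_erase, Finset.mem_erase] at hk
    rw [hQk k hk.2.1 hk.1]
  have hsplitQ : (∑ k, (Q k).edges.length)
      = (Q i).edges.length + ((Q j).edges.length
        + ∑ k ∈ (Finset.univ.erase i).erase j, (Q k).edges.length) := by
    rw [← Finset.add_sum_erase _ (fun k => (Q k).edges.length) (Finset.mem_univ i),
      ← Finset.add_sum_erase _ (fun k => (Q k).edges.length) hjmem]
  have hsplitP : (∑ k, (P k).edges.length)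
      = (P i).edges.length + ((P j).edges.length
        + ∑ k ∈ (Finset.univ.erase i).erase j, (P k).edges.length) := by
    rw [← Finset.add_sum_erase _ (fun k => (P k).edges.length) (Finset.mem_univ i),
      ← Finset.add_sum_erase _ (fun k => (P k).edges.length) hjmem]
  have hQiLen : (Q i).edges.length ≤ w₁.length := by
    rw [hQi, SimpleGraph.Walk.length_edges]
    exact SimpleGraph.Walk.length_bypass_le _
  have hQjLen : (Q j).edges.length ≤ w₂.length := by
    rw [hQj, SimpleGraph.Walk.length_edges]
    exact SimpleGraph.Walk.length_bypass_le _
  have hPiLen : (P i).edges.length = (P i).length := SimpleGraph.Walk.length_edges _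
  have hPjLen : (P j).edges.length = (P j).length := SimpleGraph.Walk.length_edges _
  have hsame : ∑ k ∈ (Finset.univ.erase i).erase j, (Q k).edges.length
      = ∑ k ∈ (Finset.univ.erase i).erase j, (P k).edges.length :=
    Finset.sum_congr rfl hrest
  omega
end

section
/- The whirl graph G is the edge-disjoint union of the graphs G_n for n ≥ 1, i.e., every edge of G lies in exactly one E_n, and consequently G is infinitely edge-connected: for any two vertices u, v of G and any natural number k, there exist k pairwise edge-disjoint u–v paths. -/
open SimpleGraph

/-- The `n`-th vertex level of the whirl graph: `V_n = {i/3^n : 0 ≤ i ≤ 3^n}`. -/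
def Vn (n : ℕ) : Set ℚ := {q | ∃ i : ℕ, i ≤ 3 ^ n ∧ q = (i : ℚ) / 3 ^ n}

/-- The `n`-th edge level of the whirl graph. -/
def En (n : ℕ) : Set (Sym2 ℚ) :=
  {e | ∃ k : ℕ, k < 3 ^ (n - 1) ∧
    (e = s(((3 * k : ℕ) : ℚ) / 3 ^ n, ((3 * k + 2 : ℕ) : ℚ) / 3 ^ n) ∨
     e = s(((3 * k + 1 : ℕ) : ℚ) / 3 ^ n, ((3 * k + 2 : ℕ) : ℚ) / 3 ^ n) ∨
     e = s(((3 * k + 1 : ℕ) : ℚ) / 3 ^ n, ((3 * k + 3 : ℕ) : ℚ) / 3 ^ n))}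

/-- The vertex set `V = ⋃_{n ≥ 1} V_n` of the whirl graph. -/
def whirlV : Set ℚ := ⋃ n ≥ 1, Vn n

/-- The whirl graph `G`, as a simple graph on `ℚ` with edge set `⋃_{n ≥ 1} E_n`. -/
def whirl : SimpleGraph ℚ := fromEdgeSet (⋃ n ≥ 1, En n)

/-- `G_{≤ n} = (V_n, E_1 ∪ ⋯ ∪ E_n)`. -/
def Gle (n : ℕ) : SimpleGraph ℚ := fromEdgeSet (⋃ k ∈ Set.Icc 1 n, En k)

/-- `G_{≥ n} = (V, ⋃_{k ≥ n} E_k)`. -/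
def Gge (n : ℕ) : SimpleGraph ℚ := fromEdgeSet (⋃ k ≥ n, En k)

def f3 (j : ℕ) : ℕ := if j % 3 = 0 then j else if j % 3 = 1 then j + 1 else j - 1

lemma f3_f3 (j : ℕ) : f3 (f3 j) = j := by
  unfold f3; split_ifs <;> omega

lemma f3_inj : Function.Injective f3 :=
  Function.LeftInverse.injective f3_f3

lemma f3_le {x M : ℕ} (h3 : 3 ∣ M) (hx : x ≤ M) : f3 x ≤ M := by
  unfold f3; split_ifs <;> omega

def cn (n j : ℕ) : ℚ := (f3 j : ℚ) / 3 ^ n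

lemma cn_inj (n : ℕ) : Function.Injective (cn n) := by
  intro a b h
  have h3 : ((3:ℚ)^n) ≠ 0 := by positivity
  have h2 : (f3 a : ℚ) = f3 b := by
    rw [cn, cn, div_eq_div_iff h3 h3] at h
    exact mul_right_cancel₀ h3 h
  exact f3_inj (by exact_mod_cast h2)

lemma edge_mem_En {n j : ℕ} (hn : 1 ≤ n) (hj : j < 3 ^ n) :
    s(cn n j, cn n (j + 1)) ∈ En n := by
  have h3 : 3 ^ n = 3 * 3 ^ (n - 1) := by
    conv_lhs => rw [show n = 1 + (n - 1) by omega]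
    rw [pow_add, pow_one]
  set k := j / 3 with hk
  have hcase : j % 3 = 0 ∨ j % 3 = 1 ∨ j % 3 = 2 := by omega
  rcases hcase with h | h | h
  · have hf1 : f3 j = 3 * k := by unfold f3; split_ifs <;> omega
    have hf2 : f3 (j + 1) = 3 * k + 2 := by unfold f3; split_ifs <;> omega
    refine ⟨k, by omega, Or.inl ?_⟩
    rw [cn, cn, hf1, hf2]
  · have hf1 : f3 j = 3 * k + 2 := by unfold f3; split_ifs <;> omega
    have hf2 : f3 (j + 1) = 3 * k + 1 := by unfold f3; split_ifs <;> omega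
    refine ⟨k, by omega, Or.inr (Or.inl ?_)⟩
    rw [cn, cn, hf1, hf2, Sym2.eq_swap]
  · have hf1 : f3 j = 3 * k + 1 := by unfold f3; split_ifs <;> omega
    have hf2 : f3 (j + 1) = 3 * k + 3 := by unfold f3; split_ifs <;> omega
    refine ⟨k, by omega, Or.inr (Or.inr ?_)⟩
    rw [cn, cn, hf1, hf2]

lemma whirl_adj {n j : ℕ} (hn : 1 ≤ n) (hj : j < 3 ^ n) :
    whirl.Adj (cn n j) (cn n (j + 1)) := by
  rw [whirl, fromEdgeSet_adj]
  constructor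
  · simp only [Set.mem_iUnion]
    exact ⟨n, hn, edge_mem_En hn hj⟩
  · intro h
    exact (by omega : j ≠ j + 1) (cn_inj n h)

def buildWalk {V : Type*} {G : SimpleGraph V} (c : ℕ → V) :
    ∀ (L : ℕ), (∀ j < L, G.Adj (c j) (c (j + 1))) → G.Walk (c 0) (c L)
  | 0, _ => Walk.nil
  | (L + 1), h => (buildWalk c L (fun j hj => h j (by omega))).concat (h L (by omega))

lemma buildWalk_support {V : Type*} {G : SimpleGraph V} (c : ℕ → V) (L : ℕ)
    (h : ∀ j < L, G.Adj (c j) (c (j + 1))) :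
    (buildWalk c L h).support = (List.range (L + 1)).map c := by
  induction L with
  | zero => simp [buildWalk, List.range_succ]
  | succ L ih =>
    rw [buildWalk, Walk.support_concat, ih, List.range_succ, List.range_succ]
    simp [List.range_succ]

lemma buildWalk_edges {V : Type*} {G : SimpleGraph V} (c : ℕ → V) (L : ℕ)
    (h : ∀ j < L, G.Adj (c j) (c (j + 1))) :
    (buildWalk c L h).edges = (List.range L).map (fun j => s(c j, c (j + 1))) := by
  induction L with
  | zero => simp [buildWalk]
  | succ L ih =>
    rw [buildWalk, Walk.edges_concat, ih, List.range_succ]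
    simp

lemma exists_path (n : ℕ) (hn : 1 ≤ n) (u v : ℚ) (i j : ℕ) (hi : i ≤ 3 ^ n) (hj : j ≤ 3 ^ n)
    (hu : u = cn n i) (hv : v = cn n j) :
    ∃ p : whirl.Walk u v, p.IsPath ∧ ∀ e ∈ p.edges, e ∈ En n := by
  suffices H : ∀ i j : ℕ, i ≤ j → j ≤ 3 ^ n → ∀ u v : ℚ, u = cn n i → v = cn n j →
      ∃ p : whirl.Walk u v, p.IsPath ∧ ∀ e ∈ p.edges, e ∈ En n by
    rcases le_total i j with h | h
    · exact H i j h hj u v hu hv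
    · obtain ⟨p, hp, hpe⟩ := H j i h hi v u hv hu
      exact ⟨p.reverse, hp.reverse, fun e he =>
        hpe e (by rwa [Walk.edges_reverse, List.mem_reverse] at he)⟩
  clear hi hj hu hv u v i j
  intro i j hij hj u v hu hv
  have adj : ∀ t < j - i, whirl.Adj (cn n (i + t)) (cn n (i + t + 1)) := fun t ht =>
    whirl_adj hn (by omega)
  let p := buildWalk (fun t => cn n (i + t)) (j - i) adj
  refine ⟨p.copy hu.symm (by rw [hv]; exact congrArg (cn n) (by omega)), ?_, ?_⟩
  · rw [Walk.isPath_copy, Walk.isPath_def, buildWalk_support]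
    exact List.Nodup.map (fun a b hab => by have := cn_inj n hab; omega) List.nodup_range
  · intro e he
    rw [Walk.edges_copy, buildWalk_edges] at he
    simp only [List.mem_map, List.mem_range] at he
    obtain ⟨t, ht, rfl⟩ := he
    exact edge_mem_En hn (by omega)

def D : Sym2 ℚ → ℚ := Sym2.lift ⟨fun a b => (a - b) ^ 2, fun a b => by ring⟩

lemma D_mk (a b : ℚ) : D s(a, b) = (a - b) ^ 2 := rfl

lemma D_En {n : ℕ} {e : Sym2 ℚ} (he : e ∈ En n) :
    D e = 1 / 9 ^ n ∨ D e = 4 / 9 ^ n := by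
  have h3 : ((3:ℚ) ^ n) ≠ 0 := by positivity
  have h9 : (9:ℚ) ^ n = 3 ^ n * 3 ^ n := by
    rw [show (9:ℚ) = 3 * 3 by norm_num, mul_pow]
  obtain ⟨k, hk, h | h | h⟩ := he <;> subst h <;> rw [D_mk, div_sub_div_same, div_pow, h9]
  · right
    congr 1
    · push_cast; ring
    · ring
  · left
    congr 1
    · push_cast; ring
    · ring
  · right
    congr 1
    · push_cast; ring
    · ring

lemma En_unique {n m : ℕ} (hn : 1 ≤ n) (hm : 1 ≤ m) {e : Sym2 ℚ}
    (hen : e ∈ En n) (hem : e ∈ En m) : n = m := by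
  have h9n : (0:ℚ) < 9 ^ n := by positivity
  have h9m : (0:ℚ) < 9 ^ m := by positivity
  have key : ∀ a b : ℕ, (a = 1 ∨ a = 4) → (b = 1 ∨ b = 4) →
      (a : ℚ) / 9 ^ n = (b : ℚ) / 9 ^ m → n = m := by
    intro a b ha hb h
    rw [div_eq_div_iff (ne_of_gt h9n) (ne_of_gt h9m)] at h
    have h' : a * 9 ^ m = b * 9 ^ n := by exact_mod_cast h
    have o9n : (9:ℕ) ^ n % 2 = 1 := by simp [Nat.pow_mod]
    have o9m : (9:ℕ) ^ m % 2 = 1 := by simp [Nat.pow_mod]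
    have hinj : (9:ℕ) ^ m = 9 ^ n → n = m := fun hh =>
      (Nat.pow_right_injective (by norm_num) hh).symm
    rcases ha with rfl | rfl <;> rcases hb with rfl | rfl
    · exact hinj (by omega)
    · omega
    · omega
    · exact hinj (by omega)
  rcases D_En hen with h1 | h1 <;> rcases D_En hem with h2 | h2
  · exact key 1 1 (Or.inl rfl) (Or.inl rfl) (by push_cast; rw [← h1, ← h2])
  · exact key 1 4 (Or.inl rfl) (Or.inr rfl) (by push_cast; rw [← h1, ← h2])
  · exact key 4 1 (Or.inr rfl) (Or.inl rfl) (by push_cast; rw [← h1, ← h2])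
  · exact key 4 4 (Or.inr rfl) (Or.inr rfl) (by push_cast; rw [← h1, ← h2])

lemma index_of' {m n a : ℕ} (hn : 1 ≤ n) (hmn : m ≤ n) (ha : a ≤ 3 ^ m) :
    ∃ i : ℕ, i ≤ 3 ^ n ∧ (a : ℚ) / 3 ^ m = cn n i := by
  refine ⟨f3 (a * 3 ^ (n - m)), ?_, ?_⟩
  · refine f3_le ⟨3 ^ (n - 1), ?_⟩ ?_
    · rw [← pow_succ']; congr 1; omega
    · calc a * 3 ^ (n - m) ≤ 3 ^ m * 3 ^ (n - m) := Nat.mul_le_mul_right _ ha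
        _ = 3 ^ n := by rw [← pow_add]; congr 1; omega
  · rw [cn, f3_f3]
    have h3 : ((3:ℚ) ^ m) ≠ 0 := by positivity
    have h3' : ((3:ℚ) ^ n) ≠ 0 := by positivity
    rw [div_eq_div_iff h3 h3']
    push_cast
    rw [mul_assoc, ← pow_add]
    congr 2
    omega

/-- The whirl graph is the edge-disjoint union of the levels `E_n` (`n ≥ 1`), i.e. every
edge lies in exactly one `E_n`, and consequently it is infinitely edge-connected. -/
theorem stmt3 :
    (∀ e ∈ whirl.edgeSet, ∃! n : ℕ, 1 ≤ n ∧ e ∈ En n) ∧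
    (∀ u ∈ whirlV, ∀ v ∈ whirlV, ∀ k : ℕ,
      ∃ P : Fin k → whirl.Walk u v, (∀ i, (P i).IsPath) ∧
        ∀ i j, i ≠ j → WalkEdgeDisjoint (P i) (P j)) := by
  constructor
  · intro e he
    rw [whirl, edgeSet_fromEdgeSet] at he
    obtain ⟨he, -⟩ := he
    simp only [Set.mem_iUnion] at he
    obtain ⟨n, hn, hen⟩ := he
    exact ⟨n, ⟨hn, hen⟩, fun m ⟨hm, hem⟩ => En_unique hm hn hem hen⟩
  · intro u hu v hv k
    simp only [whirlV, Set.mem_iUnion] at hu hv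
    obtain ⟨m, hm, a, ha, rfl⟩ := hu
    obtain ⟨m', hm', b, hb, rfl⟩ := hv
    set N := max m m' with hN
    have key : ∀ n : ℕ, N + 1 ≤ n →
        ∃ p : whirl.Walk ((a : ℚ) / 3 ^ m) ((b : ℚ) / 3 ^ m'),
          p.IsPath ∧ ∀ e ∈ p.edges, e ∈ En n := by
      intro n hn
      have hm1 : m ≤ N := le_max_left _ _
      have hm2 : m' ≤ N := le_max_right _ _
      obtain ⟨ia, hia, hua⟩ := index_of' (m := m) (n := n) (by omega) (by omega) ha
      obtain ⟨ib, hib, hvb⟩ := index_of' (m := m') (n := n) (by omega) (by omega) hb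
      exact exists_path n (by omega) _ _ ia ib hia hib hua hvb
    choose P hP hPE using fun i : Fin k => key (N + 1 + i) (by omega)
    refine ⟨P, hP, ?_⟩
    intro i j hij e he hc
    have h1 := hPE i e he
    have h2 := hPE j e hc
    have := En_unique (by omega) (by omega) h1 h2
    exact hij (Fin.ext (by omega))
end

section
/- For every integer n ≥ 1, the graph G_n = (V_n, E_n) is a Hamilton path of G_{≤n} = (V_n, E_1 ∪ ... ∪ E_n) with endpoints 0 and 1. -/
open SimpleGraph

/-!
The path visits the points `i / 3^n` in the order `0, 2, 1, 3, 5, 4, 6, …`: on each block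
`{3k, …, 3k+3}` it runs `3k → 3k+2 → 3k+1 → 3k+3`, which uses exactly the three edges of `E_n`
belonging to that block. Concatenating the `3^(n-1)` blocks gives a path from `0` to `1` through
all of `V_n` whose edge set is `E_n`; it is a path because `i ↦ i / 3^n` is injective.
-/

section Zigzag

variable {V : Type*} {G : SimpleGraph V}

def zigzagEdges (f : ℕ → V) (k : ℕ) : Set (Sym2 V) :=
  {s(f (3 * k), f (3 * k + 2)), s(f (3 * k + 1), f (3 * k + 2)), s(f (3 * k + 1), f (3 * k + 3))}

def zigzagBlock (f : ℕ → V) (k : ℕ) (h₀ : G.Adj (f (3 * k)) (f (3 * k + 2)))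
    (h₁ : G.Adj (f (3 * k + 1)) (f (3 * k + 2))) (h₂ : G.Adj (f (3 * k + 1)) (f (3 * k + 3))) :
    G.Walk (f (3 * k)) (f (3 * (k + 1))) :=
  .cons h₀ (.cons h₁.symm (.cons h₂ .nil))

theorem exists_zigzag_path {f : ℕ → V} (hf : f.Injective) (m : ℕ)
    (hadj : ∀ k < m, G.Adj (f (3 * k)) (f (3 * k + 2)) ∧ G.Adj (f (3 * k + 1)) (f (3 * k + 2)) ∧
      G.Adj (f (3 * k + 1)) (f (3 * k + 3))) :
    ∃ P : G.Walk (f 0) (f (3 * m)), P.IsPath ∧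
      (∀ e, e ∈ P.edges ↔ ∃ k < m, e ∈ zigzagEdges f k) ∧
      (∀ x, x ∈ P.support ↔ ∃ i ≤ 3 * m, x = f i) := by
  induction m with
  | zero => exact ⟨.nil, .nil, by simp, by simp⟩
  | succ m ih =>
    obtain ⟨P, hP, hPe, hPs⟩ := ih fun k hk => hadj k (by omega)
    obtain ⟨h₀, h₁, h₂⟩ := hadj m (by omega)
    let B := zigzagBlock f m h₀ h₁ h₂
    have hBs : B.support.tail = [f (3 * m + 2), f (3 * m + 1), f (3 * (m + 1))] := rfl
    have hBe : B.edges = [s(f (3 * m), f (3 * m + 2)), s(f (3 * m + 2), f (3 * m + 1)),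
        s(f (3 * m + 1), f (3 * (m + 1)))] := rfl
    refine ⟨P.append B, ?_, fun e => ?_, fun x => ?_⟩
    · rw [Walk.isPath_def, Walk.support_append, hBs]
      refine ((Walk.isPath_def _).1 hP).append ?_ ?_
      · simp only [List.nodup_cons, List.mem_cons, List.not_mem_nil, List.nodup_nil, or_false,
          and_true, not_false_eq_true, hf.eq_iff]
        omega
      · intro x hx hx'
        obtain ⟨i, hi, rfl⟩ := (hPs x).1 hx
        simp only [List.mem_cons, List.not_mem_nil, or_false, hf.eq_iff] at hx'
        omega
    · simp only [Walk.edges_append, List.mem_append, hPe, hBe, zigzagEdges, List.mem_cons,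
        List.not_mem_nil, or_false, Set.mem_insert_iff, Set.mem_singleton_iff, Sym2.eq_swap]
      constructor
      · rintro (⟨k, hk, h⟩ | h)
        · exact ⟨k, by omega, h⟩
        · exact ⟨m, by omega, h⟩
      · rintro ⟨k, hk, h⟩
        obtain hk | rfl : k < m ∨ k = m := by omega
        · exact .inl ⟨k, hk, h⟩
        · exact .inr h
    · rw [Walk.support_append, List.mem_append, hPs, hBs]
      simp only [List.mem_cons, List.not_mem_nil, or_false]
      constructor
      · rintro (⟨i, hi, rfl⟩ | rfl | rfl | rfl) <;> exact ⟨_, by omega, rfl⟩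
      · rintro ⟨i, hi, rfl⟩
        obtain hi | rfl | rfl | rfl : i ≤ 3 * m ∨ i = 3 * m + 2 ∨ i = 3 * m + 1 ∨ i = 3 * (m + 1) :=
          by omega
        exacts [.inl ⟨i, hi, rfl⟩, .inr (.inl rfl), .inr (.inr (.inl rfl)), .inr (.inr (.inr rfl))]

end Zigzag

lemma gle_adj_of_mem_En {n : ℕ} (hn : 1 ≤ n) {a b : ℚ} (h : s(a, b) ∈ En n) (hab : a ≠ b) :
    (Gle n).Adj a b := by
  rw [Gle, fromEdgeSet_adj]
  exact ⟨Set.mem_biUnion (Set.mem_Icc.2 ⟨hn, le_rfl⟩) h, hab⟩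

/-- For `n ≥ 1`, the graph `G_n = (V_n, E_n)` is a Hamilton path of `G_{≤n}` with
endpoints `0` and `1`: there is a `0`–`1` path in `G_{≤n}` whose edges are exactly `E_n`
and whose vertices are exactly `V_n`. -/
theorem stmt4 (n : ℕ) (hn : 1 ≤ n) :
    ∃ P : (Gle n).Walk 0 1, P.IsPath ∧
      (∀ e, e ∈ P.edges ↔ e ∈ En n) ∧ (∀ x, x ∈ P.support ↔ x ∈ Vn n) := by
  let f : ℕ → ℚ := fun i => (i : ℚ) / 3 ^ n
  have hf : f.Injective := fun i j h => by simpa [f] using h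
  have h3 : 3 * 3 ^ (n - 1) = 3 ^ n := by rw [← pow_succ']; congr 1; omega
  have hadj : ∀ k < 3 ^ (n - 1), (Gle n).Adj (f (3 * k)) (f (3 * k + 2)) ∧
      (Gle n).Adj (f (3 * k + 1)) (f (3 * k + 2)) ∧ (Gle n).Adj (f (3 * k + 1)) (f (3 * k + 3)) :=
    fun k hk => ⟨gle_adj_of_mem_En hn ⟨k, hk, .inl rfl⟩ (hf.ne (by omega)),
      gle_adj_of_mem_En hn ⟨k, hk, .inr (.inl rfl)⟩ (hf.ne (by omega)),
      gle_adj_of_mem_En hn ⟨k, hk, .inr (.inr rfl)⟩ (hf.ne (by omega))⟩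
  obtain ⟨P, hP, hPe, hPs⟩ := exists_zigzag_path hf _ hadj
  have h0 : f 0 = 0 := by simp [f]
  have h1 : f (3 * 3 ^ (n - 1)) = 1 := by simp [f, h3]
  refine ⟨P.copy h0 h1, by simpa using hP, fun e => ?_, fun x => ?_⟩
  · rw [Walk.edges_copy, hPe]
    rfl
  · rw [Walk.support_copy, hPs, h3]
    rfl
end

section
/- For every integer n > 1 and every vertex x ∈ V_{n−1} \ {0, 1}, the vertex x is a cutvertex of G_{≥n}, and the two components of G_{≥n} − x are the induced subgraphs on V ∩ [0, x) and V ∩ (x, 1]. -/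
open SimpleGraph

/- ### Auxiliary lemmas -/

lemma q_inj (N : ℕ) {i j : ℕ} (h : (i:ℚ)/3^N = (j:ℚ)/3^N) : i = j := by
  have h3 : (3:ℚ)^N ≠ 0 := by positivity
  field_simp at h; exact_mod_cast h

lemma q_lt (N : ℕ) {i j : ℕ} : (i:ℚ)/3^N < (j:ℚ)/3^N ↔ i < j := by
  rw [div_lt_div_iff_of_pos_right (by positivity)]; exact_mod_cast Iff.rfl

lemma q_lift {m N : ℕ} (hmN : m ≤ N) (i : ℕ) :
    (i:ℚ)/3^m = ((i * 3^(N-m) : ℕ):ℚ)/3^N := by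
  have h : (3:ℚ)^(N-m) * 3^m = 3^N := by rw [← pow_add]; congr 1; omega
  push_cast
  rw [div_eq_div_iff (by positivity) (by positivity)]
  rw [mul_comm ((i:ℚ)) ((3:ℚ)^(N-m)), mul_assoc, ← h]; ring

lemma mem_En₁ {N : ℕ} {k : ℕ} (hk : k < 3^(N-1)) :
    s(((3 * k : ℕ) : ℚ) / 3 ^ N, ((3 * k + 2 : ℕ) : ℚ) / 3 ^ N) ∈ En N :=
  ⟨k, hk, Or.inl rfl⟩

lemma mem_En₂ {N : ℕ} {k : ℕ} (hk : k < 3^(N-1)) :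
    s(((3 * k + 1 : ℕ) : ℚ) / 3 ^ N, ((3 * k + 2 : ℕ) : ℚ) / 3 ^ N) ∈ En N :=
  ⟨k, hk, Or.inr (Or.inl rfl)⟩

lemma mem_En₃ {N : ℕ} {k : ℕ} (hk : k < 3^(N-1)) :
    s(((3 * k + 1 : ℕ) : ℚ) / 3 ^ N, ((3 * k + 3 : ℕ) : ℚ) / 3 ^ N) ∈ En N :=
  ⟨k, hk, Or.inr (Or.inr rfl)⟩

lemma adjGge (n N : ℕ) (hnN : n ≤ N) {p q : ℕ} (hpq : p ≠ q)
    (h : s((p:ℚ)/3^N, (q:ℚ)/3^N) ∈ En N) :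
    (Gge n).Adj ((p:ℚ)/3^N) ((q:ℚ)/3^N) := by
  rw [Gge, fromEdgeSet_adj]
  exact ⟨Set.mem_biUnion hnN h, fun hEq => hpq (q_inj N hEq)⟩

lemma adjDel (n N : ℕ) (hnN : n ≤ N) (x : ℚ) {p q : ℕ} (hpq : p ≠ q)
    (hpx : (p:ℚ)/3^N ≠ x) (hqx : (q:ℚ)/3^N ≠ x)
    (h : s((p:ℚ)/3^N, (q:ℚ)/3^N) ∈ En N) :
    (fromEdgeSet ((Gge n).edgeSet \ {e | x ∈ e})).Adj ((p:ℚ)/3^N) ((q:ℚ)/3^N) := by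
  have hne : (p:ℚ)/3^N ≠ (q:ℚ)/3^N := fun hEq => hpq (q_inj N hEq)
  rw [fromEdgeSet_adj]
  refine ⟨⟨?_, ?_⟩, hne⟩
  · rw [Gge, edgeSet_fromEdgeSet]
    exact ⟨Set.mem_biUnion hnN h, by simpa [Sym2.isDiag_iff_proj_eq] using hne⟩
  · intro hmem
    rcases Sym2.mem_iff.mp hmem with h' | h'
    · exact hpx h'.symm
    · exact hqx h'.symm

lemma chain_reach {G : SimpleGraph ℚ} (f : ℕ → ℚ) (a b : ℕ) (hab : a ≤ b)
    (h : ∀ i, a ≤ i → i < b → G.Reachable (f i) (f (i+1))) :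
    G.Reachable (f a) (f b) := by
  induction b, hab using Nat.le_induction with
  | base => exact Reachable.refl _
  | succ b hab ih =>
    exact (ih (fun i h1 h2 => h i h1 (by omega))).trans (h b hab (by omega))

/-- One step `i → i+1` in `G_{≥n}` along level-`N` edges. -/
lemma reach_succ (n N : ℕ) (hnN : n ≤ N) (hN : 1 ≤ N) (i : ℕ) (hi : i + 1 ≤ 3^N) :
    (Gge n).Reachable ((i:ℚ)/3^N) (((i+1:ℕ):ℚ)/3^N) := by
  have h3N : (3:ℕ)^N = 3 * 3^(N-1) := by
    conv_lhs => rw [show N = (N-1)+1 by omega]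
    rw [pow_succ]; ring
  set k := i / 3 with hkdef
  have hk : k < 3^(N-1) := by
    have : i < 3 * 3^(N-1) := by omega
    omega
  have hr : i % 3 = 0 ∨ i % 3 = 1 ∨ i % 3 = 2 := by omega
  rcases hr with hr | hr | hr
  · have h1 : i = 3 * k := by omega
    have h2 : i + 1 = 3 * k + 1 := by omega
    rw [h2, h1]
    exact ((adjGge n N hnN (by omega) (mem_En₁ hk)).reachable).trans
      ((adjGge n N hnN (by omega) (mem_En₂ hk)).symm.reachable)
  · have h1 : i = 3 * k + 1 := by omega
    have h2 : i + 1 = 3 * k + 2 := by omega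
    rw [h2, h1]
    exact (adjGge n N hnN (by omega) (mem_En₂ hk)).reachable
  · have h1 : i = 3 * k + 2 := by omega
    have h2 : i + 1 = 3 * k + 3 := by omega
    rw [h2, h1]
    exact ((adjGge n N hnN (by omega) (mem_En₂ hk)).symm.reachable).trans
      ((adjGge n N hnN (by omega) (mem_En₃ hk)).reachable)

/-- One step `i → i+1` avoiding the vertex `X/3^N`, provided the step stays on one side. -/
lemma reach_succ_del (n N X : ℕ) (hnN : n ≤ N) (hN : 1 ≤ N) (hX3 : 3 ∣ X)
    (i : ℕ) (hi : i + 1 ≤ 3^N) (hside : i + 1 < X ∨ X < i) :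
    (fromEdgeSet ((Gge n).edgeSet \ {e | ((X:ℚ)/3^N) ∈ e})).Reachable
      ((i:ℚ)/3^N) (((i+1:ℕ):ℚ)/3^N) := by
  have h3N : (3:ℕ)^N = 3 * 3^(N-1) := by
    conv_lhs => rw [show N = (N-1)+1 by omega]
    rw [pow_succ]; ring
  set k := i / 3 with hkdef
  have hk : k < 3^(N-1) := by
    have : i < 3 * 3^(N-1) := by omega
    omega
  have hne : ∀ p : ℕ, p ≠ X → (p:ℚ)/3^N ≠ (X:ℚ)/3^N :=
    fun p hp hEq => hp (q_inj N hEq)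
  have hr : i % 3 = 0 ∨ i % 3 = 1 ∨ i % 3 = 2 := by omega
  rcases hr with hr | hr | hr
  · have h1 : i = 3 * k := by omega
    have h2 : i + 1 = 3 * k + 1 := by omega
    rw [h2, h1]
    exact ((adjDel n N hnN _ (by omega) (hne _ (by omega)) (hne _ (by omega))
        (mem_En₁ hk)).reachable).trans
      ((adjDel n N hnN _ (by omega) (hne _ (by omega)) (hne _ (by omega))
        (mem_En₂ hk)).symm.reachable)
  · have h1 : i = 3 * k + 1 := by omega
    have h2 : i + 1 = 3 * k + 2 := by omega
    rw [h2, h1]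
    exact (adjDel n N hnN _ (by omega) (hne _ (by omega)) (hne _ (by omega))
      (mem_En₂ hk)).reachable
  · have h1 : i = 3 * k + 2 := by omega
    have h2 : i + 1 = 3 * k + 3 := by omega
    rw [h2, h1]
    exact ((adjDel n N hnN _ (by omega) (hne _ (by omega)) (hne _ (by omega))
        (mem_En₂ hk)).symm.reachable).trans
      ((adjDel n N hnN _ (by omega) (hne _ (by omega)) (hne _ (by omega))
        (mem_En₃ hk)).reachable)

lemma whirlV_elim {a : ℚ} (ha : a ∈ whirlV) :
    ∃ m : ℕ, 1 ≤ m ∧ ∃ i : ℕ, i ≤ 3^m ∧ a = (i:ℚ)/3^m := by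
  rw [whirlV] at ha
  rcases Set.mem_iUnion₂.mp ha with ⟨m, hm, i, hi, he⟩
  exact ⟨m, hm, i, hi, he⟩

lemma walk_side {G : SimpleGraph ℚ} {x : ℚ}
    (hstep : ∀ u v, G.Adj u v → u < x → v < x) :
    ∀ {u b : ℚ}, G.Walk u b → u < x → b < x := by
  intro u b w
  induction w with
  | nil => exact id
  | cons h p ih => exact fun hu => ih (hstep _ _ h hu)

/-- For `n > 1` and `x ∈ V_{n-1} \ {0,1}`, the vertex `x` is a cutvertex of `G_{≥n}`:
`G_{≥n}` is connected on `V`, and after deleting all edges at `x` the two sides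
`V ∩ [0,x)` and `V ∩ (x,1]` are each connected but mutually unreachable. -/
theorem stmt5 (n : ℕ) (hn : 1 < n) (x : ℚ)
    (hx : x ∈ Vn (n - 1)) (hx0 : x ≠ 0) (hx1 : x ≠ 1) :
    (∀ a ∈ whirlV, ∀ b ∈ whirlV, (Gge n).Reachable a b) ∧
    (∀ a ∈ whirlV ∩ Set.Ico 0 x, ∀ b ∈ whirlV ∩ Set.Ico 0 x,
      (SimpleGraph.fromEdgeSet ((Gge n).edgeSet \ {e | x ∈ e})).Reachable a b) ∧
    (∀ a ∈ whirlV ∩ Set.Ioc x 1, ∀ b ∈ whirlV ∩ Set.Ioc x 1,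
      (SimpleGraph.fromEdgeSet ((Gge n).edgeSet \ {e | x ∈ e})).Reachable a b) ∧
    (∀ a ∈ whirlV ∩ Set.Ico 0 x, ∀ b ∈ whirlV ∩ Set.Ioc x 1,
      ¬ (SimpleGraph.fromEdgeSet ((Gge n).edgeSet \ {e | x ∈ e})).Reachable a b) := by
  obtain ⟨I, hI, hxI⟩ := hx
  have hI0 : I ≠ 0 := by
    rintro rfl; exact hx0 (by simpa using hxI)
  have hI1 : I ≠ 3^(n-1) := by
    rintro rfl
    apply hx1
    rw [hxI]; push_cast; rw [div_self (by positivity)]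
  -- For each level N ≥ n, `x = X_N / 3^N` with `X_N` divisible by 3.
  have hxN : ∀ N : ℕ, n ≤ N → x = ((I * 3^(N-(n-1)) : ℕ):ℚ)/3^N := by
    intro N hN
    rw [hxI]; exact q_lift (by omega) I
  have hX3 : ∀ N : ℕ, n ≤ N → 3 ∣ I * 3^(N-(n-1)) := by
    intro N hN
    have hd : N - (n-1) = (N - (n-1) - 1) + 1 := by omega
    rw [hd, pow_succ]
    exact ⟨I * 3^(N-(n-1)-1), by ring⟩
  have hXlt : ∀ N : ℕ, n ≤ N → I * 3^(N-(n-1)) < 3^N := by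
    intro N hN
    have h1 : I < 3^(n-1) := lt_of_le_of_ne hI hI1
    calc I * 3^(N-(n-1)) < 3^(n-1) * 3^(N-(n-1)) :=
          (Nat.mul_lt_mul_right (by positivity)).mpr h1
      _ = 3^N := by rw [← pow_add]; congr 1; omega
  have hX0 : ∀ N : ℕ, n ≤ N → 0 < I * 3^(N-(n-1)) := by
    intro N hN
    exact Nat.mul_pos (Nat.pos_of_ne_zero hI0) (by positivity)
  refine ⟨?_, ?_, ?_, ?_⟩
  · -- full connectivity
    have key : ∀ a ∈ whirlV, (Gge n).Reachable a 0 := by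
      intro a ha
      obtain ⟨m, hm, i, hi, he⟩ := whirlV_elim ha
      set N := max n m with hN
      have hnN : n ≤ N := le_max_left _ _
      have haN : a = ((i * 3^(N-m) : ℕ):ℚ)/3^N := by rw [he]; exact q_lift (le_max_right _ _) i
      have hbound : i * 3^(N-m) ≤ 3^N := by
        calc i * 3^(N-m) ≤ 3^m * 3^(N-m) := Nat.mul_le_mul_right _ hi
          _ = 3^N := by rw [← pow_add]; congr 1; omega
      have h0 : ((0:ℕ):ℚ)/3^N = 0 := by simp
      have hch : (Gge n).Reachable (((0:ℕ):ℚ)/3^N) (((i * 3^(N-m) : ℕ):ℚ)/3^N) :=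
        chain_reach (fun j => ((j:ℕ):ℚ)/3^N) 0 (i * 3^(N-m))
          (Nat.zero_le _) (fun j _ hj => reach_succ n N hnN (by omega) j (by omega))
      rw [h0] at hch
      rw [haN]
      exact hch.symm
    intro a ha b hb
    exact (key a ha).trans (key b hb).symm
  · -- left side connectivity
    have key : ∀ a ∈ whirlV ∩ Set.Ico 0 x,
        (SimpleGraph.fromEdgeSet ((Gge n).edgeSet \ {e | x ∈ e})).Reachable a 0 := by
      rintro a ⟨ha, _, hax⟩
      obtain ⟨m, hm, i, hi, he⟩ := whirlV_elim ha
      set N := max n m with hN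
      have hnN : n ≤ N := le_max_left _ _
      set X := I * 3^(N-(n-1)) with hXdef
      have hxX : x = ((X:ℕ):ℚ)/3^N := hxN N hnN
      have haN : a = ((i * 3^(N-m) : ℕ):ℚ)/3^N := by rw [he]; exact q_lift (le_max_right _ _) i
      have hlt : i * 3^(N-m) < X := by
        rw [haN, hxX] at hax
        exact (q_lt N).mp hax
      have hbound : X ≤ 3^N := le_of_lt (hXlt N hnN)
      have h0 : ((0:ℕ):ℚ)/3^N = 0 := by simp
      have hch : (SimpleGraph.fromEdgeSet ((Gge n).edgeSet \ {e | x ∈ e})).Reachable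
          (((0:ℕ):ℚ)/3^N) (((i * 3^(N-m) : ℕ):ℚ)/3^N) :=
        chain_reach (fun j => ((j:ℕ):ℚ)/3^N) 0 (i * 3^(N-m))
          (Nat.zero_le _) (fun j _ hj => by
            rw [hxX]
            exact reach_succ_del n N X hnN (by omega) (hX3 N hnN) j (by omega)
              (Or.inl (by omega)))
      rw [h0] at hch
      rw [haN]
      exact hch.symm
    intro a ha b hb
    exact (key a ha).trans (key b hb).symm
  · -- right side connectivity
    have key : ∀ b ∈ whirlV ∩ Set.Ioc x 1,
        (SimpleGraph.fromEdgeSet ((Gge n).edgeSet \ {e | x ∈ e})).Reachable b 1 := by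
      rintro b ⟨hb, hxb, _⟩
      obtain ⟨m, hm, i, hi, he⟩ := whirlV_elim hb
      set N := max n m with hN
      have hnN : n ≤ N := le_max_left _ _
      set X := I * 3^(N-(n-1)) with hXdef
      have hxX : x = ((X:ℕ):ℚ)/3^N := hxN N hnN
      have hbN : b = ((i * 3^(N-m) : ℕ):ℚ)/3^N := by rw [he]; exact q_lift (le_max_right _ _) i
      have hlt : X < i * 3^(N-m) := by
        rw [hbN, hxX] at hxb
        exact (q_lt N).mp hxb
      have hbound : i * 3^(N-m) ≤ 3^N := by
        calc i * 3^(N-m) ≤ 3^m * 3^(N-m) := Nat.mul_le_mul_right _ hi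
          _ = 3^N := by rw [← pow_add]; congr 1; omega
      have h1 : (((3^N:ℕ)):ℚ)/3^N = 1 := by
        push_cast; rw [div_self (by positivity)]
      have hch : (SimpleGraph.fromEdgeSet ((Gge n).edgeSet \ {e | x ∈ e})).Reachable
          (((i * 3^(N-m) : ℕ):ℚ)/3^N) ((((3^N:ℕ)):ℚ)/3^N) :=
        chain_reach (fun j => ((j:ℕ):ℚ)/3^N) (i * 3^(N-m)) (3^N)
          hbound (fun j hj hj' => by
            rw [hxX]
            exact reach_succ_del n N X hnN (by omega) (hX3 N hnN) j (by omega)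
              (Or.inr (by omega)))
      rw [h1] at hch
      rw [hbN]
      exact hch
    intro a ha b hb
    exact (key a ha).trans (key b hb).symm
  · -- separation
    rintro a ⟨haV, _, hax⟩ b ⟨hbV, hxb, _⟩ hreach
    -- every edge of the deleted graph stays on one side of x
    have step : ∀ u v : ℚ,
        (SimpleGraph.fromEdgeSet ((Gge n).edgeSet \ {e | x ∈ e})).Adj u v →
        u < x → v < x := by
      intro u v huv hu
      rw [fromEdgeSet_adj] at huv
      obtain ⟨⟨hmem, hxe⟩, hne⟩ := huv
      rw [Gge, edgeSet_fromEdgeSet] at hmem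
      obtain ⟨hmem, _⟩ := hmem
      rcases Set.mem_iUnion₂.mp hmem with ⟨m, hm, k, hk, hcase⟩
      have hxm : x = ((I * 3^(m-(n-1)) : ℕ):ℚ)/3^m := by
        rw [hxI]; exact q_lift (by omega) I
      set X := I * 3^(m-(n-1)) with hXdef
      have h3X : 3 ∣ X := by
        have hd : m - (n-1) = (m - (n-1) - 1) + 1 := by omega
        rw [hXdef, hd, pow_succ]
        exact ⟨I * 3^(m-(n-1)-1), by ring⟩
      have hxne : ∀ p : ℕ, x ≠ (p:ℚ)/3^m → X ≠ p := by
        intro p hp hEq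
        exact hp (by rw [hxm, hEq])
      have main : ∀ p q : ℕ, s(u,v) = s((p:ℚ)/3^m, (q:ℚ)/3^m) →
          (3 ∣ X → ¬ (p < X ∧ X < q)) → p < q →
          x ≠ (p:ℚ)/3^m → x ≠ (q:ℚ)/3^m → v < x := by
        intro p q heq hno hpq hxp hxq
        rcases Sym2.eq_iff.mp heq with ⟨hu', hv'⟩ | ⟨hu', hv'⟩
        · -- u = p side, v = q side
          subst hu' hv'
          rw [hxm] at hu ⊢
          rw [q_lt] at hu ⊢
          have hXq : X ≠ q := hxne q hxq
          by_contra hcon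
          push_neg at hcon
          exact hno h3X ⟨hu, by omega⟩
        · subst hu' hv'
          rw [hxm] at hu ⊢
          rw [q_lt] at hu ⊢
          omega
      have hxmem : ∀ w : ℚ, w ∈ s(u,v) → x ≠ w := by
        intro w hw hEq
        exact hxe (by rw [hEq]; exact hw)
      rcases hcase with heq | heq | heq
      · refine main (3*k) (3*k+2) heq (fun h3 ⟨h1,h2⟩ => by omega) (by omega) ?_ ?_
        · exact hxmem _ (by rw [heq]; exact Sym2.mem_mk_left _ _)
        · exact hxmem _ (by rw [heq]; exact Sym2.mem_mk_right _ _)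
      · refine main (3*k+1) (3*k+2) heq (fun h3 ⟨h1,h2⟩ => by omega) (by omega) ?_ ?_
        · exact hxmem _ (by rw [heq]; exact Sym2.mem_mk_left _ _)
        · exact hxmem _ (by rw [heq]; exact Sym2.mem_mk_right _ _)
      · refine main (3*k+1) (3*k+3) heq (fun h3 ⟨h1,h2⟩ => by omega) (by omega) ?_ ?_
        · exact hxmem _ (by rw [heq]; exact Sym2.mem_mk_left _ _)
        · exact hxmem _ (by rw [heq]; exact Sym2.mem_mk_right _ _)
    obtain ⟨w⟩ := hreach
    have hb : b < x := walk_side step w hax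
    linarith
end

section
/- Let u, v ∈ V be vertices of the whirl graph with u < v in ℚ, and let n > 1 be an integer with u, v ∈ V_{n−1}. If P ⊆ G_{≥n} is any u–v path, then V_{n−1} ∩ [u, v] ⊆ V(P) ⊆ V ∩ [u, v], and P traverses the vertices in V_{n−1} ∩ [u, v] in the natural order induced by ℚ. -/
open SimpleGraph

/-!
An edge of `E_m` joins two points `a/3^m, b/3^m` with `3k ≤ a, b ≤ 3k + 3`, so it never jumps
over a point `3i/3^m` of `V_{m-1}`; as `V_{n-1} ⊆ V_{m-1}` for `m ≥ n`, no edge of `G_{≥n}` jumps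
over a point of `V_{n-1}`. Hence a walk in `G_{≥n}` from a vertex `≤ w` to a vertex `≥ w`, with
`w ∈ V_{n-1}`, must pass through `w`. Applied to the initial segment of `P` ending at a vertex `z`:
if `z > v` that segment would meet `v` before its end, impossible on a path (and `z < u` is the
same argument on the reversed path); and for `x < y` in `V_{n-1} ∩ [u, v]` the segment ending at
`y` contains `x`, so `x` comes first.
-/

namespace SimpleGraph

theorem Walk.idxOf_lt_idxOf_of_mem_support_takeUntil {V : Type*} [DecidableEq V]
    {G : SimpleGraph V} {u v x y : V} (p : G.Walk u v) (hy : y ∈ p.support)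
    (hx : x ∈ (p.takeUntil y hy).support) (hxy : x ≠ y) :
    p.support.idxOf x < p.support.idxOf y := by
  rw [← length_takeUntil p hy, ← length_takeUntil p (p.support_takeUntil_subset_support hy hx),
    ← takeUntil_takeUntil p hy hx]
  exact length_takeUntil_lt_length hx hxy

theorem Walk.support_subset_of_adj {V : Type*} {G : SimpleGraph V} {S : Set V}
    (hS : ∀ ⦃a b⦄, G.Adj a b → a ∈ S) {x y : V} (W : G.Walk x y) (hy : y ∈ S) :
    ∀ z ∈ W.support, z ∈ S := by
  induction W with
  | nil => simpa using hy
  | cons hab W ih => simpa [hS hab] using ih hy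

variable {α : Type*} [LinearOrder α] {G : SimpleGraph α}

def NoEdgeAcross (G : SimpleGraph α) (w : α) : Prop :=
  ∀ ⦃a b⦄, G.Adj a b → a < w → b ≤ w

namespace Walk

theorem mem_support_of_noEdgeAcross {w x y : α} (hw : G.NoEdgeAcross w) (W : G.Walk x y)
    (hx : x ≤ w) (hy : w ≤ y) : w ∈ W.support := by
  induction W with
  | nil => simp [le_antisymm hy hx]
  | @cons a b c hab W ih =>
    rcases hx.eq_or_lt with rfl | hlt
    · simp
    · exact List.mem_cons_of_mem _ (ih (hw hab hlt) hy)

theorem mem_support_of_noEdgeAcross' {w x y : α} (hw : G.NoEdgeAcross w) (W : G.Walk x y)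
    (hy : y ≤ w) (hx : w ≤ x) : w ∈ W.support := by
  simpa using W.reverse.mem_support_of_noEdgeAcross hw hy hx

theorem idxOf_lt_idxOf_of_noEdgeAcross [DecidableEq α] {u v x y : α} (p : G.Walk u v)
    (hx : G.NoEdgeAcross x) (hux : u ≤ x) (hxy : x < y) (hy : y ∈ p.support) :
    p.support.idxOf x < p.support.idxOf y :=
  p.idxOf_lt_idxOf_of_mem_support_takeUntil hy
    ((p.takeUntil y hy).mem_support_of_noEdgeAcross hx hux hxy.le) hxy.ne

theorem IsPath.le_end_of_mem_support {u v z : α} {p : G.Walk u v} (hp : p.IsPath)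
    (hv : G.NoEdgeAcross v) (huv : u ≤ v) (hz : z ∈ p.support) : z ≤ v := by
  classical
  by_contra! hvz
  exact endpoint_notMem_support_takeUntil hp hz hvz.ne
    ((p.takeUntil z hz).mem_support_of_noEdgeAcross hv huv hvz.le)

theorem IsPath.start_le_of_mem_support {u v z : α} {p : G.Walk u v} (hp : p.IsPath)
    (hu : G.NoEdgeAcross u) (huv : u ≤ v) (hz : z ∈ p.support) : u ≤ z := by
  classical
  by_contra! hzu
  have hz' : z ∈ p.reverse.support := by simpa using hz
  exact endpoint_notMem_support_takeUntil hp.reverse hz' hzu.ne'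
    ((p.reverse.takeUntil z hz').mem_support_of_noEdgeAcross' hu hzu.le huv)

end Walk

end SimpleGraph

lemma Vn_mono {l m : ℕ} (h : l ≤ m) : Vn l ⊆ Vn m := by
  rintro _ ⟨i, hi, rfl⟩
  obtain ⟨d, rfl⟩ := Nat.exists_eq_add_of_le h
  refine ⟨i * 3 ^ d, by rw [pow_add]; exact Nat.mul_le_mul_right _ hi, ?_⟩
  push_cast
  rw [pow_add]
  field_simp

lemma exists_numerators_of_mem_En {m : ℕ} {x y : ℚ} (h : s(x, y) ∈ En (m + 1)) :
    ∃ k a b : ℕ, k < 3 ^ m ∧ 3 * k ≤ a ∧ a ≤ 3 * k + 3 ∧ 3 * k ≤ b ∧ b ≤ 3 * k + 3 ∧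
      x = a / 3 ^ (m + 1) ∧ y = b / 3 ^ (m + 1) := by
  obtain ⟨k, hk, he | he | he⟩ := h <;> rw [Nat.add_sub_cancel] at hk <;>
    rcases Sym2.eq_iff.1 he with ⟨rfl, rfl⟩ | ⟨rfl, rfl⟩
  all_goals exact ⟨k, _, _, hk, by omega, by omega, by omega, by omega, rfl, rfl⟩

lemma mem_Vn_of_mem_En {m : ℕ} {x y : ℚ} (h : s(x, y) ∈ En (m + 1)) : x ∈ Vn (m + 1) := by
  obtain ⟨k, a, -, hk, -, ha, -, -, rfl, -⟩ := exists_numerators_of_mem_En h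
  exact ⟨a, by rw [pow_succ]; omega, rfl⟩

lemma le_of_lt_of_mem_En {m : ℕ} {x y w : ℚ} (h : s(x, y) ∈ En (m + 1)) (hw : w ∈ Vn m)
    (hxw : x < w) : y ≤ w := by
  obtain ⟨k, a, b, -, hka, -, -, hbk, rfl, rfl⟩ := exists_numerators_of_mem_En h
  obtain ⟨i, -, rfl⟩ := hw
  have hi : (i : ℚ) / 3 ^ m = ((3 * i : ℕ) : ℚ) / 3 ^ (m + 1) := by
    push_cast; rw [pow_succ]; field_simp
  rw [hi] at hxw ⊢
  rw [div_lt_div_iff_of_pos_right (by positivity), Nat.cast_lt] at hxw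
  rw [div_le_div_iff_of_pos_right (by positivity), Nat.cast_le]
  omega

lemma exists_mem_En_of_Gge_adj {n : ℕ} (hn : 1 ≤ n) {x y : ℚ} (h : (Gge n).Adj x y) :
    ∃ m, n ≤ m + 1 ∧ s(x, y) ∈ En (m + 1) := by
  obtain ⟨m, hm, he⟩ := Set.mem_iUnion₂.1 ((fromEdgeSet_adj _).1 h).1
  exact ⟨m - 1, by omega, by rwa [Nat.sub_add_cancel (by omega)]⟩

lemma Gge_noEdgeAcross {n : ℕ} (hn : 1 ≤ n) {w : ℚ} (hw : w ∈ Vn (n - 1)) :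
    (Gge n).NoEdgeAcross w := by
  intro x y h hxw
  obtain ⟨m, hnm, he⟩ := exists_mem_En_of_Gge_adj hn h
  exact le_of_lt_of_mem_En he (Vn_mono (by omega) hw) hxw

lemma mem_whirlV_of_Gge_adj {n : ℕ} (hn : 1 ≤ n) {x y : ℚ} (h : (Gge n).Adj x y) :
    x ∈ whirlV := by
  obtain ⟨m, -, he⟩ := exists_mem_En_of_Gge_adj hn h
  exact Set.mem_iUnion₂.2 ⟨m + 1, by omega, mem_Vn_of_mem_En he⟩

theorem stmt6_general (u v : ℚ) (hv : v ∈ whirlV) (huv : u < v)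
    (n : ℕ) (hn : 1 < n) (hun : u ∈ Vn (n - 1)) (hvn : v ∈ Vn (n - 1))
    (P : (Gge n).Walk u v) (hP : P.IsPath) :
    (∀ w ∈ Vn (n - 1) ∩ Set.Icc u v, w ∈ P.support) ∧
    (∀ w ∈ P.support, w ∈ whirlV ∩ Set.Icc u v) ∧
    (∀ x ∈ Vn (n - 1) ∩ Set.Icc u v, ∀ y ∈ Vn (n - 1) ∩ Set.Icc u v, x < y →
      P.support.idxOf x < P.support.idxOf y) := by
  have hcut : ∀ w ∈ Vn (n - 1), (Gge n).NoEdgeAcross w := fun w hw => Gge_noEdgeAcross hn.le hw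
  have hvisit : ∀ w ∈ Vn (n - 1) ∩ Set.Icc u v, w ∈ P.support := fun w ⟨hw, hwu, hwv⟩ =>
    P.mem_support_of_noEdgeAcross (hcut w hw) hwu hwv
  refine ⟨hvisit, fun z hz => ⟨?_, ?_, ?_⟩, ?_⟩
  · exact P.support_subset_of_adj (fun _ _ h => mem_whirlV_of_Gge_adj hn.le h) hv z hz
  · exact hP.start_le_of_mem_support (hcut u hun) huv.le hz
  · exact hP.le_end_of_mem_support (hcut v hvn) huv.le hz
  · rintro x ⟨hx, hux, -⟩ y hy hxy
    exact P.idxOf_lt_idxOf_of_noEdgeAcross (hcut x hx) hux hxy (hvisit y hy)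

/-- Lemma 2.2: if `u < v` lie in `V_{n-1}` (`n > 1`) and `P` is a `u`–`v` path in `G_{≥n}`,
then `V_{n-1} ∩ [u,v] ⊆ V(P) ⊆ V ∩ [u,v]`, and `P` traverses the vertices of
`V_{n-1} ∩ [u,v]` in the natural order of `ℚ`. -/
theorem stmt6 (u v : ℚ) (hu : u ∈ whirlV) (hv : v ∈ whirlV) (huv : u < v)
    (n : ℕ) (hn : 1 < n) (hun : u ∈ Vn (n - 1)) (hvn : v ∈ Vn (n - 1))
    (P : (Gge n).Walk u v) (hP : P.IsPath) :
    (∀ w ∈ Vn (n - 1) ∩ Set.Icc u v, w ∈ P.support) ∧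
    (∀ w ∈ P.support, w ∈ whirlV ∩ Set.Icc u v) ∧
    (∀ x ∈ Vn (n - 1) ∩ Set.Icc u v, ∀ y ∈ Vn (n - 1) ∩ Set.Icc u v, x < y →
      P.support.idxOf x < P.support.idxOf y) :=
  stmt6_general u v hv huv n hn hun hvn P hP
end

section
/- The whirl graph does not contain infinitely many pairwise edge-disjoint pairwise order-compatible u–v paths, for any two vertices u and v. -/
open SimpleGraph

namespace WhirlAux

/-- Low-level edges: all edges of levels `1..M`. -/
def lowE (M : ℕ) : Set (Sym2 ℚ) := ⋃ n ∈ Set.Icc 1 M, En n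

lemma mem_lowE {e : Sym2 ℚ} {M n : ℕ} (h1 : 1 ≤ n) (h2 : n ≤ M) (h : e ∈ En n) :
    e ∈ lowE M := by
  simp only [lowE, Set.mem_iUnion, Set.mem_Icc]
  exact ⟨n, ⟨h1, h2⟩, h⟩

lemma lowE_mono {N M : ℕ} (h : N ≤ M) : lowE N ⊆ lowE M := by
  intro e he
  simp only [lowE, Set.mem_iUnion, Set.mem_Icc] at he ⊢
  obtain ⟨n, ⟨ha, hb⟩, hc⟩ := he
  exact ⟨n, ⟨ha, hb.trans h⟩, hc⟩

lemma En_finite (n : ℕ) : (En n).Finite := by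
  have hsub : En n ⊆
      ((fun k : ℕ => s(((3 * k : ℕ) : ℚ) / 3 ^ n, ((3 * k + 2 : ℕ) : ℚ) / 3 ^ n)) '' Set.Iio (3 ^ (n - 1)))
      ∪ ((fun k : ℕ => s(((3 * k + 1 : ℕ) : ℚ) / 3 ^ n, ((3 * k + 2 : ℕ) : ℚ) / 3 ^ n)) '' Set.Iio (3 ^ (n - 1)))
      ∪ ((fun k : ℕ => s(((3 * k + 1 : ℕ) : ℚ) / 3 ^ n, ((3 * k + 3 : ℕ) : ℚ) / 3 ^ n)) '' Set.Iio (3 ^ (n - 1))) := by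
    rintro e ⟨k, hk, h | h | h⟩
    · exact Or.inl (Or.inl ⟨k, hk, h.symm⟩)
    · exact Or.inl (Or.inr ⟨k, hk, h.symm⟩)
    · exact Or.inr ⟨k, hk, h.symm⟩
  exact Set.Finite.subset
    ((((Set.finite_Iio _).image _).union ((Set.finite_Iio _).image _)).union
      ((Set.finite_Iio _).image _)) hsub

lemma lowE_finite (M : ℕ) : (lowE M).Finite :=
  (Set.finite_Icc 1 M).biUnion fun n _ => En_finite n

/-- Every whirl edge has the canonical level-`n` form. -/
lemma edge_rep {e : Sym2 ℚ} (he : e ∈ whirl.edgeSet) :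
    ∃ n k : ℕ, 1 ≤ n ∧ k < 3 ^ (n - 1) ∧ e ∈ En n ∧
      (e = s(((3 * k : ℕ) : ℚ) / 3 ^ n, ((3 * k + 2 : ℕ) : ℚ) / 3 ^ n) ∨
       e = s(((3 * k + 1 : ℕ) : ℚ) / 3 ^ n, ((3 * k + 2 : ℕ) : ℚ) / 3 ^ n) ∨
       e = s(((3 * k + 1 : ℕ) : ℚ) / 3 ^ n, ((3 * k + 3 : ℕ) : ℚ) / 3 ^ n)) := by
  rw [whirl, edgeSet_fromEdgeSet] at he
  obtain ⟨hmem, -⟩ := he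
  simp only [Set.mem_iUnion] at hmem
  obtain ⟨n, hn, k, hk, hcase⟩ := hmem
  exact ⟨n, k, hn, hk, ⟨k, hk, hcase⟩, hcase⟩

lemma qdiv_lt {a b : ℕ} (n : ℕ) (h : a < b) :
    ((a : ℚ)) / 3 ^ n < ((b : ℚ)) / 3 ^ n := by
  have h3 : (0 : ℚ) < 3 ^ n := by positivity
  rw [div_lt_div_iff₀ h3 h3]
  have hab : (a : ℚ) < b := by exact_mod_cast h
  nlinarith

lemma num_den_nat (a n : ℕ) (h3 : ¬ 3 ∣ a) :
    (((a : ℚ)) / 3 ^ n).num = a ∧ (((a : ℚ)) / 3 ^ n).den = 3 ^ n := by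
  have hco : (Int.natAbs a).Coprime (3 ^ n) := by
    apply Nat.Coprime.pow_right
    rw [Int.natAbs_natCast]
    exact Nat.coprime_comm.mp ((Nat.Prime.coprime_iff_not_dvd Nat.prime_three).mpr h3)
  have hq : ((a : ℚ)) / 3 ^ n = (⟨(a : ℤ), 3 ^ n, pow_ne_zero n (by norm_num), hco⟩ : ℚ) := by
    rw [Rat.mk_eq_divInt, Rat.divInt_eq_div]
    push_cast
    ring
  rw [hq]
  constructor <;> rfl

lemma den_div_dvd_nat (a n : ℕ) : (((a : ℚ)) / 3 ^ n).den ∣ 3 ^ n := by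
  have h := Rat.den_dvd (a : ℤ) ((3 : ℤ) ^ n)
  rw [Rat.divInt_eq_div] at h
  have hcast : (((3 : ℤ) ^ n : ℤ) : ℚ) = (3 : ℚ) ^ n := by push_cast; ring
  rw [hcast] at h
  have hcast2 : ((a : ℤ) : ℚ) = (a : ℚ) := by push_cast; ring
  rw [hcast2] at h
  exact_mod_cast h

/-- Crossing edges are low-level: an edge strictly straddling a point with denominator
`3^N` has level at most `N`. -/
lemma straddle_low {x y p : ℚ} (hx : s(x, y) ∈ whirl.edgeSet) (j : ℤ) (N : ℕ)
    (hp : p = (j : ℚ) / 3 ^ N) (h1 : x < p) (h2 : p < y) : s(x, y) ∈ lowE N := by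
  obtain ⟨n, k, hn, hk, hEn, hcase⟩ := edge_rep hx
  rcases le_or_gt n N with hle | hlt
  · exact mem_lowE hn hle hEn
  · exfalso
    set m : ℤ := j * 3 ^ (n - N) with hm
    have hpow : (3 : ℚ) ^ n = 3 ^ N * 3 ^ (n - N) := by
      rw [← pow_add]
      congr 1
      omega
    have hmq : (m : ℚ) = p * 3 ^ n := by
      rw [hp, hpow, hm]
      have h3N : (3 : ℚ) ^ N ≠ 0 := by positivity
      push_cast
      field_simp
    have h3m : (3 : ℤ) ∣ m := by
      rw [hm]
      exact Dvd.dvd.mul_left (dvd_pow_self 3 (by omega : n - N ≠ 0)) j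
    have h3pos : (0 : ℚ) < 3 ^ n := by positivity
    -- In each case extract integer bounds and conclude by omega.
    rcases hcase with hcs | hcs | hcs
    · have hAC := qdiv_lt (a := 3 * k) (b := 3 * k + 2) n (by omega)
      rcases Sym2.eq_iff.mp hcs with ⟨hxA, hyC⟩ | ⟨hxC, hyA⟩
      · rw [hxA] at h1; rw [hyC] at h2
        have hb1 : ((3 * k : ℕ) : ℚ) < p * 3 ^ n := (div_lt_iff₀ h3pos).mp h1
        have hb2 : p * 3 ^ n < ((3 * k + 2 : ℕ) : ℚ) := (lt_div_iff₀ h3pos).mp h2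
        rw [← hmq] at hb1 hb2
        have hb1' : (3 * k : ℤ) < m := by exact_mod_cast hb1
        have hb2' : m < 3 * k + 2 := by exact_mod_cast hb2
        omega
      · rw [hxC] at h1; rw [hyA] at h2
        have := h1.trans h2
        exact absurd this (not_lt.mpr hAC.le)
    · have hAC := qdiv_lt (a := 3 * k + 1) (b := 3 * k + 2) n (by omega)
      rcases Sym2.eq_iff.mp hcs with ⟨hxA, hyC⟩ | ⟨hxC, hyA⟩
      · rw [hxA] at h1; rw [hyC] at h2
        have hb1 : ((3 * k + 1 : ℕ) : ℚ) < p * 3 ^ n := (div_lt_iff₀ h3pos).mp h1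
        have hb2 : p * 3 ^ n < ((3 * k + 2 : ℕ) : ℚ) := (lt_div_iff₀ h3pos).mp h2
        rw [← hmq] at hb1 hb2
        have hb1' : (3 * k + 1 : ℤ) < m := by exact_mod_cast hb1
        have hb2' : m < 3 * k + 2 := by exact_mod_cast hb2
        omega
      · rw [hxC] at h1; rw [hyA] at h2
        have := h1.trans h2
        exact absurd this (not_lt.mpr hAC.le)
    · have hAC := qdiv_lt (a := 3 * k + 1) (b := 3 * k + 3) n (by omega)
      rcases Sym2.eq_iff.mp hcs with ⟨hxA, hyC⟩ | ⟨hxC, hyA⟩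
      · rw [hxA] at h1; rw [hyC] at h2
        have hb1 : ((3 * k + 1 : ℕ) : ℚ) < p * 3 ^ n := (div_lt_iff₀ h3pos).mp h1
        have hb2 : p * 3 ^ n < ((3 * k + 3 : ℕ) : ℚ) := (lt_div_iff₀ h3pos).mp h2
        rw [← hmq] at hb1 hb2
        have hb1' : (3 * k + 1 : ℤ) < m := by exact_mod_cast hb1
        have hb2' : m < 3 * k + 3 := by exact_mod_cast hb2
        omega
      · rw [hxC] at h1; rw [hyA] at h2
        have := h1.trans h2
        exact absurd this (not_lt.mpr hAC.le)

end WhirlAux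

namespace WhirlAux

open SimpleGraph.Walk

/-- Discrete intermediate value: a walk from below `p` to above `p` that never
straddles `p` with an edge must visit `p`. -/
lemma ivt_lt : ∀ {a b : ℚ} (W : whirl.Walk a b) (p : ℚ),
    (∀ x y : ℚ, s(x, y) ∈ W.edges → x < p → p < y → False) →
    a < p → p < b → p ∈ W.support := by
  intro a b W
  induction W with
  | nil =>
    intro p _ h1 h2
    exact absurd (h1.trans h2) (lt_irrefl _)
  | @cons a x b hadj W ih =>
    intro p hstr h1 h2
    by_cases hxp : x = p
    · subst hxp
      rw [support_cons]
      exact List.mem_cons_of_mem _ (start_mem_support W)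
    · have hxle : ¬ p < x := fun hcon =>
        hstr a x (by rw [edges_cons]; exact List.mem_cons_self) h1 hcon
      have hxlt : x < p := lt_of_le_of_ne (not_lt.mp hxle) hxp
      have hmem := ih p
        (fun x' y' hm => hstr x' y' (by rw [edges_cons]; exact List.mem_cons_of_mem _ hm))
        hxlt h2
      rw [support_cons]
      exact List.mem_cons_of_mem _ hmem

/-- Mirror version of `ivt_lt`. -/
lemma ivt_gt : ∀ {a b : ℚ} (W : whirl.Walk a b) (p : ℚ),
    (∀ x y : ℚ, s(x, y) ∈ W.edges → x < p → p < y → False) →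
    p < a → b < p → p ∈ W.support := by
  intro a b W
  induction W with
  | nil =>
    intro p _ h1 h2
    exact absurd (h2.trans h1) (lt_irrefl _)
  | @cons a x b hadj W ih =>
    intro p hstr h1 h2
    by_cases hxp : x = p
    · subst hxp
      rw [support_cons]
      exact List.mem_cons_of_mem _ (start_mem_support W)
    · have hxle : ¬ x < p := fun hcon =>
        hstr x a (by rw [edges_cons, Sym2.eq_swap]; exact List.mem_cons_self) hcon h1
      have hxlt : p < x := lt_of_le_of_ne (not_lt.mp hxle) (Ne.symm hxp)
      have hmem := ih p
        (fun x' y' hm => hstr x' y' (by rw [edges_cons]; exact List.mem_cons_of_mem _ hm))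
        hxlt h2
      rw [support_cons]
      exact List.mem_cons_of_mem _ hmem

/-- If a walk starts above `q`, never straddles `q` and never visits `q`,
it stays above `q`. -/
lemma all_gt : ∀ {a b : ℚ} (W : whirl.Walk a b) (q : ℚ),
    (∀ x y : ℚ, s(x, y) ∈ W.edges → x < q → q < y → False) →
    q < a → q ∉ W.support → ∀ x ∈ W.support, q < x := by
  intro a b W
  induction W with
  | nil =>
    intro q _ hqa _ x hx
    rw [support_nil, List.mem_singleton] at hx
    subst hx; exact hqa
  | @cons a y b hadj W ih =>
    intro q hstr hqa hns x hx
    rw [support_cons] at hx hns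
    have hyq : q < y := by
      rcases lt_trichotomy y q with h | h | h
      · exact absurd (hstr y a (by rw [edges_cons, Sym2.eq_swap]; exact List.mem_cons_self) h hqa) not_false
      · exact absurd (h ▸ List.mem_cons_of_mem _ (start_mem_support W) : q ∈ a :: W.support) hns
      · exact h
    rcases List.mem_cons.mp hx with h | h
    · subst h; exact hqa
    · exact ih q
        (fun x' y' hm => hstr x' y' (by rw [edges_cons]; exact List.mem_cons_of_mem _ hm))
        hyq (fun hcon => hns (List.mem_cons_of_mem _ hcon)) x h

/-- If a walk starts below `q`, never straddles `q` and never visits `q`,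
it stays below `q`. -/
lemma all_lt : ∀ {a b : ℚ} (W : whirl.Walk a b) (q : ℚ),
    (∀ x y : ℚ, s(x, y) ∈ W.edges → x < q → q < y → False) →
    a < q → q ∉ W.support → ∀ x ∈ W.support, x < q := by
  intro a b W
  induction W with
  | nil =>
    intro q _ hqa _ x hx
    rw [support_nil, List.mem_singleton] at hx
    subst hx; exact hqa
  | @cons a y b hadj W ih =>
    intro q hstr hqa hns x hx
    rw [support_cons] at hx hns
    have hyq : y < q := by
      rcases lt_trichotomy y q with h | h | h
      · exact h
      · exact absurd (h ▸ List.mem_cons_of_mem _ (start_mem_support W) : q ∈ a :: W.support) hns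
      · exact absurd (hstr a y (by rw [edges_cons]; exact List.mem_cons_self) hqa h) not_false
    rcases List.mem_cons.mp hx with h | h
    · subst h; exact hqa
    · exact ih q
        (fun x' y' hm => hstr x' y' (by rw [edges_cons]; exact List.mem_cons_of_mem _ hm))
        hyq (fun hcon => hns (List.mem_cons_of_mem _ hcon)) x h

/-- Monotone passage: if a walk never straddles `w` by an edge and starts below `w`,
then `w` is visited before any later (larger) vertex `z`. -/
lemma order_lemma : ∀ {a b : ℚ} (W : whirl.Walk a b) (w z : ℚ),
    (∀ x y : ℚ, s(x, y) ∈ W.edges → x < w → w < y → False) →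
    a < w → w < z → w ∈ W.support → z ∈ W.support →
    W.support.idxOf w < W.support.idxOf z := by
  intro a b W
  induction W with
  | nil =>
    intro w z _ haw hwz hw _
    rw [support_nil, List.mem_singleton] at hw
    exact absurd hw.symm (ne_of_lt haw)
  | @cons a x b hadj W ih =>
    intro w z hstr haw hwz hw hz
    have hwa : a ≠ w := ne_of_lt haw
    have hza : a ≠ z := ne_of_lt (haw.trans hwz)
    rw [support_cons] at hw hz ⊢
    have hw' : w ∈ W.support := (List.mem_cons.mp hw).resolve_left (fun h => hwa h.symm)
    have hz' : z ∈ W.support := (List.mem_cons.mp hz).resolve_left (fun h => hza h.symm)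
    rw [List.idxOf_cons_ne _ hwa, List.idxOf_cons_ne _ hza]
    have hxw : ¬ w < x := fun hcon =>
      hstr a x (by rw [edges_cons]; exact List.mem_cons_self) haw hcon
    rcases eq_or_lt_of_le (not_lt.mp hxw) with heq | hlt
    · -- x = w : w is the head of W.support
      subst heq
      have hsup := support_eq_cons W
      rw [hsup, List.idxOf_cons_self, List.idxOf_cons_ne _ (ne_of_lt hwz)]
      omega
    · exact Nat.succ_lt_succ (ih w z
        (fun x' y' hm => hstr x' y' (by rw [edges_cons]; exact List.mem_cons_of_mem _ hm))
        hlt hwz hw' hz')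

end WhirlAux

namespace WhirlAux

open SimpleGraph.Walk

/-- "b-type" vertices: numerator `≡ 1 (mod 3)`. -/
def bty (q : ℚ) : Prop := q.num % 3 = 1

/-- An edge arriving at a b-type vertex from the left comes from a b-type vertex
of strictly larger denominator. -/
lemma incb {a x : ℚ} (h : whirl.Adj a x) (hax : a < x) (hb : bty x) :
    bty a ∧ x.den < a.den := by
  have he : s(a, x) ∈ whirl.edgeSet := whirl.mem_edgeSet.mpr h
  obtain ⟨n, k, hn, hk, hEn, hcase⟩ := edge_rep he
  rcases hcase with hcs | hcs | hcs
  · exfalso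
    have hAC := qdiv_lt (a := 3 * k) (b := 3 * k + 2) n (by omega)
    rcases Sym2.eq_iff.mp hcs with ⟨h1, h2⟩ | ⟨h1, h2⟩
    · -- x = C : numerator ≡ 2 mod 3
      have hnum := (num_den_nat (3 * k + 2) n (by omega)).1
      rw [h2] at hb
      unfold bty at hb
      rw [hnum] at hb
      omega
    · rw [h1, h2] at hax
      exact absurd (hax.trans hAC) (lt_irrefl _)
  · exfalso
    have hAC := qdiv_lt (a := 3 * k + 1) (b := 3 * k + 2) n (by omega)
    rcases Sym2.eq_iff.mp hcs with ⟨h1, h2⟩ | ⟨h1, h2⟩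
    · have hnum := (num_den_nat (3 * k + 2) n (by omega)).1
      rw [h2] at hb
      unfold bty at hb
      rw [hnum] at hb
      omega
    · rw [h1, h2] at hax
      exact absurd (hax.trans hAC) (lt_irrefl _)
  · have hAC := qdiv_lt (a := 3 * k + 1) (b := 3 * k + 3) n (by omega)
    rcases Sym2.eq_iff.mp hcs with ⟨h1, h2⟩ | ⟨h1, h2⟩
    · -- a = B, x = D
      have hnum := num_den_nat (3 * k + 1) n (by omega)
      constructor
      · unfold bty
        rw [h1, hnum.1]
        omega
      · have hdena : a.den = 3 ^ n := by rw [h1]; exact hnum.2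
        have hx3 : ((3 * k + 3 : ℕ) : ℚ) / 3 ^ n = ((k + 1 : ℕ) : ℚ) / 3 ^ (n - 1) := by
          have h3n : (3 : ℚ) ^ n = 3 ^ (n - 1) * 3 := by
            rw [← pow_succ]
            congr 1
            omega
          rw [h3n]
          have hne : (3 : ℚ) ^ (n - 1) ≠ 0 := by positivity
          push_cast
          field_simp
        have hdvd : x.den ∣ 3 ^ (n - 1) := by
          rw [h2, hx3]
          exact den_div_dvd_nat (k + 1) (n - 1)
        have hle : x.den ≤ 3 ^ (n - 1) := Nat.le_of_dvd (by positivity) hdvd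
        have hlt : (3 : ℕ) ^ (n - 1) < 3 ^ n :=
          Nat.pow_lt_pow_right (by norm_num) (by omega)
        rw [hdena]
        omega
    · exfalso
      rw [h1, h2] at hax
      exact absurd (hax.trans hAC) (lt_irrefl _)

/-- Chain lemma: a strictly increasing walk ending at a b-type vertex starts at a
b-type vertex of strictly larger denominator. -/
lemma chainB : ∀ {x c : ℚ} (W : whirl.Walk x c) {a : ℚ} (h : whirl.Adj a x),
    List.Chain' (· < ·) (SimpleGraph.Walk.cons h W).support → bty c →
    bty a ∧ c.den < a.den := by
  intro x c W
  induction W with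
  | nil =>
    intro a h hch hc
    rw [support_cons, support_nil] at hch
    exact incb h (List.isChain_cons_cons.mp hch).1 hc
  | @cons x y c hadj W ih =>
    intro a h hch hc
    have hch' : List.Chain' (· < ·) (SimpleGraph.Walk.cons hadj W).support := by
      rw [support_cons] at hch
      exact hch.tail
    have hax : a < x := by
      rw [support_cons, support_cons] at hch
      exact (List.isChain_cons_cons.mp hch).1
    obtain ⟨hbx, hdx⟩ := ih hadj hch' hc
    obtain ⟨hba, hda⟩ := incb h hax hbx
    exact ⟨hba, hdx.trans hda⟩

/-- Pigeonhole: in an edge-disjoint family, only finitely many members can use an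
edge from a fixed finite set. -/
lemma fin_bad {u v : ℚ} (P : ℕ → whirl.Walk u v)
    (hd : ∀ i j, i ≠ j → WalkEdgeDisjoint (P i) (P j))
    {T : Set (Sym2 ℚ)} (hT : T.Finite) :
    {i : ℕ | ∃ e ∈ (P i).edges, e ∈ T}.Finite := by
  have hsub : {i : ℕ | ∃ e ∈ (P i).edges, e ∈ T} ⊆ ⋃ e ∈ T, {i : ℕ | e ∈ (P i).edges} := by
    rintro i ⟨e, he1, he2⟩
    exact Set.mem_biUnion he2 he1
  refine Set.Finite.subset (hT.biUnion fun e _ => ?_) hsub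
  apply Set.Subsingleton.finite
  intro i hi j hj
  by_contra hij
  exact hd i j hij e hi hj

lemma idx_rev {l : List ℚ} (hn : l.Nodup) {x : ℚ} (hx : x ∈ l) :
    l.reverse.idxOf x = l.length - 1 - l.idxOf x := by
  have hi : l.idxOf x < l.length := List.idxOf_lt_length_iff.mpr hx
  have hxr : x ∈ l.reverse := List.mem_reverse.mpr hx
  have hir : l.reverse.idxOf x < l.reverse.length := List.idxOf_lt_length_iff.mpr hxr
  have hLr : l.reverse.length = l.length := List.length_reverse
  have hL2 : l.length - 1 - l.idxOf x < l.reverse.length := by omega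
  have h1 : l.reverse.get ⟨l.reverse.idxOf x, hir⟩ = x := List.idxOf_get hir
  have h2 : l.reverse.get ⟨l.length - 1 - l.idxOf x, hL2⟩ = x := by
    rw [List.get_eq_getElem, List.getElem_reverse]
    have harith : l.length - 1 - (l.length - 1 - l.idxOf x) = l.idxOf x := by omega
    simp only [harith]
    have := List.idxOf_get hi
    rw [List.get_eq_getElem] at this
    exact this
  have hnr : l.reverse.Nodup := List.nodup_reverse.mpr hn
  have := hnr.get_inj_iff.mp (h1.trans h2.symm)
  have := Fin.mk.injEq _ _ _ _ ▸ this
  omega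

lemma compat_reverse {l₁ l₂ : List ℚ} (h : ListCompat l₁ l₂)
    (h₁ : l₁.Nodup) (h₂ : l₂.Nodup) :
    ListCompat l₁.reverse l₂.reverse := by
  intro x y hx hy hx2 hy2
  rw [List.mem_reverse] at hx hy hx2 hy2
  have base := h y x hy hx hy2 hx2
  rw [idx_rev h₁ hx, idx_rev h₁ hy, idx_rev h₂ hx2, idx_rev h₂ hy2]
  have b1 := List.idxOf_lt_length_iff.mpr hx
  have b2 := List.idxOf_lt_length_iff.mpr hy
  have b3 := List.idxOf_lt_length_iff.mpr hx2
  have b4 := List.idxOf_lt_length_iff.mpr hy2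
  have e1 : l₁.length - 1 - l₁.idxOf x ≤ l₁.length - 1 - l₁.idxOf y ↔
      l₁.idxOf y ≤ l₁.idxOf x := by omega
  have e2 : l₂.length - 1 - l₂.idxOf x ≤ l₂.length - 1 - l₂.idxOf y ↔
      l₂.idxOf y ≤ l₂.idxOf x := by omega
  rw [e1, e2]
  exact base

end WhirlAux

namespace WhirlAux

open SimpleGraph.Walk

lemma main_lt (u v : ℚ) (hu : u ∈ whirlV) (hv : v ∈ whirlV) (huv : u < v)
    (P : ℕ → whirl.Walk u v) (hp : ∀ i, (P i).IsPath)
    (hd : ∀ i j, i ≠ j → WalkEdgeDisjoint (P i) (P j))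
    (hc : ∀ i j, ListCompat (P i).support (P j).support) : False := by
  classical
  -- extract denominator data
  have hu' : ∃ n : ℕ, 1 ≤ n ∧ ∃ i : ℕ, i ≤ 3 ^ n ∧ u = (i : ℚ) / 3 ^ n := by
    simpa [whirlV, Vn, Set.mem_iUnion] using hu
  have hv' : ∃ n : ℕ, 1 ≤ n ∧ ∃ i : ℕ, i ≤ 3 ^ n ∧ v = (i : ℚ) / 3 ^ n := by
    simpa [whirlV, Vn, Set.mem_iUnion] using hv
  obtain ⟨nu, hnu1, iu, hiu, huq⟩ := hu'
  obtain ⟨nv, hnv1, iv, hiv, hvq⟩ := hv'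
  set B := max nu nv with hB
  -- first pigeonhole: a path avoiding all low-level edges
  have hS1 : {i : ℕ | ∃ e ∈ (P i).edges, e ∈ lowE B}.Finite := fin_bad P hd (lowE_finite B)
  obtain ⟨i₀, hi₀⟩ := hS1.infinite_compl.nonempty
  have hclean : ∀ e ∈ (P i₀).edges, e ∉ lowE B := by
    intro e he hbad
    exact hi₀ ⟨e, he, hbad⟩
  have hdenu : u.den ∣ 3 ^ nu := by rw [huq]; exact den_div_dvd_nat iu nu
  have hdenv : v.den ∣ 3 ^ nv := by rw [hvq]; exact den_div_dvd_nat iv nv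
  -- straddle-freeness of P i₀ at u and at v
  have hstru : ∀ x y : ℚ, s(x, y) ∈ (P i₀).edges → x < u → u < y → False := by
    intro x y hm h1 h2
    exact hclean _ hm (lowE_mono (le_max_left nu nv)
      (straddle_low ((P i₀).edges_subset_edgeSet hm) (iu : ℤ) nu (by rw [huq]; push_cast; ring) h1 h2))
  have hstrv : ∀ x y : ℚ, s(x, y) ∈ (P i₀).edges → x < v → v < y → False := by
    intro x y hm h1 h2
    exact hclean _ hm (lowE_mono (le_max_right nu nv)
      (straddle_low ((P i₀).edges_subset_edgeSet hm) (iv : ℤ) nv (by rw [hvq]; push_cast; ring) h1 h2))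
  have hnodup : (P i₀).support.Nodup := (hp i₀).support_nodup
  -- The chosen path is not strictly increasing
  have hninc : ¬ List.Chain' (· < ·) (P i₀).support := by
    intro hch
    obtain ⟨y1, h2e, W2, hdec2⟩ := exists_eq_cons_of_ne huv.ne' (P i₀).reverse
    have hsupp : (P i₀).support.reverse = v :: W2.support := by
      rw [← support_reverse, hdec2, support_cons]
    have hsupp2 : (P i₀).support = W2.support.reverse ++ [v] := by
      have h := congrArg List.reverse hsupp
      simpa using h
    have hpair : List.Pairwise (· < ·) (P i₀).support := List.isChain_iff_pairwise.mp hch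
    rw [hsupp2] at hpair
    have hpa := List.pairwise_append.mp hpair
    have hy1v : y1 < v := by
      have := hpa.2.2 y1 (List.mem_reverse.mpr (start_mem_support W2)) v (List.mem_singleton_self v)
      exact this
    have hEmem : s(v, y1) ∈ whirl.edgeSet := whirl.mem_edgeSet.mpr h2e
    obtain ⟨n, k, hn1, hk, hEn, hcase⟩ := edge_rep hEmem
    have hePmem : s(v, y1) ∈ (P i₀).edges := by
      have h : s(v, y1) ∈ (P i₀).reverse.edges := by
        rw [hdec2, edges_cons]
        exact List.mem_cons_self
      rwa [edges_reverse, List.mem_reverse] at h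
    refine hclean _ hePmem (mem_lowE hn1 ?_ hEn)
    -- bound the level of the last edge
    rcases hcase with hcs | hcs | hcs
    · have hAC := qdiv_lt (a := 3 * k) (b := 3 * k + 2) n (by omega)
      rcases Sym2.eq_iff.mp hcs with ⟨hv1, hy1⟩ | ⟨hv1, hy1⟩
      · exfalso
        rw [hv1, hy1] at hy1v
        exact absurd (hy1v.trans hAC) (lt_irrefl _)
      · have hvden : v.den = 3 ^ n := by
          rw [hv1]
          exact (num_den_nat (3 * k + 2) n (by omega)).2
        have hdv : (3 : ℕ) ^ n ∣ 3 ^ nv := hvden ▸ hdenv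
        have hle : (3 : ℕ) ^ n ≤ 3 ^ nv := Nat.le_of_dvd (by positivity) hdv
        have : n ≤ nv := by
          by_contra hcon
          exact absurd hle (not_le.mpr (Nat.pow_lt_pow_right (by norm_num) (by omega)))
        exact this.trans (le_max_right nu nv)
    · have hAC := qdiv_lt (a := 3 * k + 1) (b := 3 * k + 2) n (by omega)
      rcases Sym2.eq_iff.mp hcs with ⟨hv1, hy1⟩ | ⟨hv1, hy1⟩
      · exfalso
        rw [hv1, hy1] at hy1v
        exact absurd (hy1v.trans hAC) (lt_irrefl _)
      · have hvden : v.den = 3 ^ n := by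
          rw [hv1]
          exact (num_den_nat (3 * k + 2) n (by omega)).2
        have hdv : (3 : ℕ) ^ n ∣ 3 ^ nv := hvden ▸ hdenv
        have hle : (3 : ℕ) ^ n ≤ 3 ^ nv := Nat.le_of_dvd (by positivity) hdv
        have : n ≤ nv := by
          by_contra hcon
          exact absurd hle (not_le.mpr (Nat.pow_lt_pow_right (by norm_num) (by omega)))
        exact this.trans (le_max_right nu nv)
    · have hAC := qdiv_lt (a := 3 * k + 1) (b := 3 * k + 3) n (by omega)
      rcases Sym2.eq_iff.mp hcs with ⟨hv1, hy1⟩ | ⟨hv1, hy1⟩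
      · exfalso
        rw [hv1, hy1] at hy1v
        exact absurd (hy1v.trans hAC) (lt_irrefl _)
      · -- v = D, y1 = B
        have hy1nd := num_den_nat (3 * k + 1) n (by omega)
        have hbty : bty y1 := by
          unfold bty
          rw [hy1, hy1nd.1]
          omega
        have hy1den : y1.den = 3 ^ n := by rw [hy1]; exact hy1nd.2
        by_cases hyu : y1 = u
        · have hdu : (3 : ℕ) ^ n ∣ 3 ^ nu := by
            rw [← hy1den, hyu]
            exact hdenu
          have hle : (3 : ℕ) ^ n ≤ 3 ^ nu := Nat.le_of_dvd (by positivity) hdu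
          have : n ≤ nu := by
            by_contra hcon
            exact absurd hle (not_le.mpr (Nat.pow_lt_pow_right (by norm_num) (by omega)))
          exact this.trans (le_max_left nu nv)
        · have hne : u ≠ y1 := fun h => hyu h.symm
          obtain ⟨a1, h3e, W4, hdec3⟩ := exists_eq_cons_of_ne hne W2.reverse
          have hch4 : List.Chain' (· < ·) (SimpleGraph.Walk.cons h3e W4).support := by
            rw [← hdec3, support_reverse]
            exact List.isChain_iff_pairwise.mpr hpa.1
          obtain ⟨hbu, hdlt⟩ := chainB W4 h3e hch4 hbty
          have h1 : (3 : ℕ) ^ n < u.den := by rw [← hy1den]; exact hdlt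
          have h2 : u.den ≤ 3 ^ nu := Nat.le_of_dvd (by positivity) hdenu
          have h3 : (3 : ℕ) ^ n < 3 ^ nu := lt_of_lt_of_le h1 h2
          have : n < nu := by
            by_contra hcon
            exact absurd h3 (not_lt.mpr (Nat.pow_le_pow_right (by norm_num) (by omega)))
          omega
  -- extract a decreasing consecutive pair
  unfold List.Chain' at hninc
  rw [List.isChain_iff_getElem] at hninc
  push_neg at hninc
  obtain ⟨ℓ, hℓ, hge⟩ := hninc
  set S := (P i₀).support with hS
  have hLlen : ℓ + 1 < S.length := by omega
  set zq := S.get ⟨ℓ, by omega⟩ with hzq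
  set wq := S.get ⟨ℓ + 1, hLlen⟩ with hwq
  have hadjsup : List.Chain' whirl.Adj S := isChain_adj_support (P i₀)
  have hadjzw : whirl.Adj zq wq := List.isChain_iff_getElem.mp hadjsup ℓ hℓ
  have hwz : wq < zq := by
    rcases lt_trichotomy wq zq with h | h | h
    · exact h
    · exact absurd h.symm hadjzw.ne
    · exact absurd h (not_lt.mpr hge)
  have hidx : ∀ (m : ℕ) (hm : m < S.length), S.idxOf (S.get ⟨m, hm⟩) = m := by
    intro m hm
    have h1 : S.idxOf (S.get ⟨m, hm⟩) < S.length :=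
      List.idxOf_lt_length_iff.mpr (List.get_mem _ _)
    have h2 : S.get ⟨S.idxOf (S.get ⟨m, hm⟩), h1⟩ = S.get ⟨m, hm⟩ := List.idxOf_get h1
    have := hnodup.get_inj_iff.mp h2
    exact Fin.mk.injEq _ _ _ _ ▸ this
  have hidxz : S.idxOf zq = ℓ := by rw [hzq]; exact hidx ℓ (by omega)
  have hidxw : S.idxOf wq = ℓ + 1 := by rw [hwq]; exact hidx (ℓ + 1) hLlen
  -- u < wq
  have hwu : wq ≠ u := by
    intro h
    have hiu0 : S.idxOf u = 0 := by
      rw [hS, support_eq_cons (P i₀)]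
      exact List.idxOf_cons_self
    rw [h, hiu0] at hidxw
    omega
  -- range facts
  obtain ⟨x1, h1e, W1, hdec1⟩ := exists_eq_cons_of_ne huv.ne (P i₀)
  have hnod1 : u ∉ W1.support := by
    have h := hnodup
    rw [hS, hdec1, support_cons] at h
    exact (List.nodup_cons.mp h).1
  have hstru1 : ∀ x y : ℚ, s(x, y) ∈ W1.edges → x < u → u < y → False := by
    intro x y hm
    exact hstru x y (by rw [hdec1, edges_cons]; exact List.mem_cons_of_mem _ hm)
  have hux1 : u < x1 := by
    rcases lt_trichotomy u x1 with h | h | h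
    · exact h
    · exact absurd h h1e.ne
    · exact absurd (ivt_lt W1 u hstru1 h huv) hnod1
  have hlow : ∀ x ∈ (P i₀).support, x = u ∨ u < x := by
    intro x hx
    rw [hdec1, support_cons] at hx
    rcases List.mem_cons.mp hx with h | h
    · exact Or.inl h
    · exact Or.inr (all_gt W1 u hstru1 hux1 hnod1 x h)
  obtain ⟨y1', h2e', W2', hdec2'⟩ := exists_eq_cons_of_ne huv.ne' (P i₀).reverse
  have hnodR : (P i₀).reverse.support.Nodup := by
    rw [support_reverse]
    exact List.nodup_reverse.mpr hnodup
  have hnod2 : v ∉ W2'.support := by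
    have h := hnodR
    rw [hdec2', support_cons] at h
    exact (List.nodup_cons.mp h).1
  have hstrv2 : ∀ x y : ℚ, s(x, y) ∈ W2'.edges → x < v → v < y → False := by
    intro x y hm
    refine hstrv x y ?_
    have h : s(x, y) ∈ (P i₀).reverse.edges := by
      rw [hdec2', edges_cons]
      exact List.mem_cons_of_mem _ hm
    rwa [edges_reverse, List.mem_reverse] at h
  have hy1v' : y1' < v := by
    rcases lt_trichotomy y1' v with h | h | h
    · exact h
    · exact absurd h.symm h2e'.ne
    · exact absurd (ivt_gt W2' v hstrv2 h huv) hnod2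
  have hhigh : ∀ x ∈ (P i₀).support, x = v ∨ x < v := by
    intro x hx
    have hx' : x ∈ (P i₀).reverse.support := by
      rw [support_reverse, List.mem_reverse]
      exact hx
    rw [hdec2', support_cons] at hx'
    rcases List.mem_cons.mp hx' with h | h
    · exact Or.inl h
    · exact Or.inr (all_lt W2' v hstrv2 hy1v' hnod2 x h)
  have hwmemS : wq ∈ S := by rw [hwq]; exact List.get_mem _ _
  have hzmemS : zq ∈ S := by rw [hzq]; exact List.get_mem _ _
  have hwmem : wq ∈ (P i₀).support := hS ▸ hwmemS
  have hzmem : zq ∈ (P i₀).support := hS ▸ hzmemS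
  have huw : u < wq := (hlow wq hwmem).resolve_left hwu
  have hzv : zq < v := by
    refine (hhigh zq hzmem).resolve_left ?_
    intro h
    have hlast : S.getLast (by simp [hS]) = v := getLast_support (P i₀)
    have hlen1 : S.length - 1 < S.length := by omega
    have hvL : S.get ⟨S.length - 1, hlen1⟩ = v := by
      rw [← hlast, List.getLast_eq_getElem, List.get_eq_getElem]
    have hivL : S.idxOf v = S.length - 1 := by
      rw [← hvL]
      exact hidx _ hlen1
    rw [h, hivL] at hidxz
    omega
  have huz : u < zq := huw.trans hwz
  have hwv : wq < v := hwz.trans hzv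
  -- denominator form of zq and wq
  have hezw : s(zq, wq) ∈ whirl.edgeSet := whirl.mem_edgeSet.mpr hadjzw
  obtain ⟨n2, k2, hn2, hk2, hEn2, hc2⟩ := edge_rep hezw
  have hforms : (∃ jz : ℤ, zq = (jz : ℚ) / 3 ^ n2) ∧ (∃ jw : ℤ, wq = (jw : ℚ) / 3 ^ n2) := by
    rcases hc2 with h | h | h <;> rcases Sym2.eq_iff.mp h with ⟨h1, h2⟩ | ⟨h1, h2⟩
    · exact ⟨⟨((3 * k2 : ℕ) : ℤ), by rw [h1]; push_cast; ring⟩,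
        ⟨((3 * k2 + 2 : ℕ) : ℤ), by rw [h2]; push_cast; ring⟩⟩
    · exact ⟨⟨((3 * k2 + 2 : ℕ) : ℤ), by rw [h1]; push_cast; ring⟩,
        ⟨((3 * k2 : ℕ) : ℤ), by rw [h2]; push_cast; ring⟩⟩
    · exact ⟨⟨((3 * k2 + 1 : ℕ) : ℤ), by rw [h1]; push_cast; ring⟩,
        ⟨((3 * k2 + 2 : ℕ) : ℤ), by rw [h2]; push_cast; ring⟩⟩
    · exact ⟨⟨((3 * k2 + 2 : ℕ) : ℤ), by rw [h1]; push_cast; ring⟩,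
        ⟨((3 * k2 + 1 : ℕ) : ℤ), by rw [h2]; push_cast; ring⟩⟩
    · exact ⟨⟨((3 * k2 + 1 : ℕ) : ℤ), by rw [h1]; push_cast; ring⟩,
        ⟨((3 * k2 + 3 : ℕ) : ℤ), by rw [h2]; push_cast; ring⟩⟩
    · exact ⟨⟨((3 * k2 + 3 : ℕ) : ℤ), by rw [h1]; push_cast; ring⟩,
        ⟨((3 * k2 + 1 : ℕ) : ℤ), by rw [h2]; push_cast; ring⟩⟩
  obtain ⟨⟨jz, hjz⟩, ⟨jw, hjw⟩⟩ := hforms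
  -- second pigeonhole
  have hS2 : ({i : ℕ | ∃ e ∈ (P i).edges, e ∈ lowE n2} ∪ {i₀}).Finite :=
    (fin_bad P hd (lowE_finite n2)).union (Set.finite_singleton i₀)
  obtain ⟨j, hj⟩ := hS2.infinite_compl.nonempty
  have hQclean : ∀ e ∈ (P j).edges, e ∉ lowE n2 := by
    intro e he hb
    exact hj (Or.inl ⟨e, he, hb⟩)
  have hstrw : ∀ x y : ℚ, s(x, y) ∈ (P j).edges → x < wq → wq < y → False := by
    intro x y hm h1 h2
    exact hQclean _ hm (straddle_low ((P j).edges_subset_edgeSet hm) jw n2 hjw h1 h2)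
  have hstrz : ∀ x y : ℚ, s(x, y) ∈ (P j).edges → x < zq → zq < y → False := by
    intro x y hm h1 h2
    exact hQclean _ hm (straddle_low ((P j).edges_subset_edgeSet hm) jz n2 hjz h1 h2)
  have hwQ : wq ∈ (P j).support := ivt_lt (P j) wq hstrw huw hwv
  have hzQ : zq ∈ (P j).support := ivt_lt (P j) zq hstrz huz hzv
  have horder : (P j).support.idxOf wq < (P j).support.idxOf zq :=
    order_lemma (P j) wq zq hstrw huw hwz hwQ hzQ
  have hcompa := hc i₀ j zq wq hzmem hwmem hzQ hwQ
  rw [← hS] at hcompa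
  rw [hidxz, hidxw] at hcompa
  have hfinal : (P j).support.idxOf zq ≤ (P j).support.idxOf wq := hcompa.mp (by omega)
  omega

end WhirlAux

/-- The whirl graph contains no infinite family of pairwise edge-disjoint, pairwise
order-compatible `u`–`v` paths, for any two (distinct) vertices `u` and `v`. -/
theorem stmt8 (u v : ℚ) (hu : u ∈ whirlV) (hv : v ∈ whirlV) (huv : u ≠ v) :
    ¬ ∃ P : ℕ → whirl.Walk u v, (∀ i, (P i).IsPath) ∧
      (∀ i j, i ≠ j → WalkEdgeDisjoint (P i) (P j)) ∧
      (∀ i j, ListCompat (P i).support (P j).support) := by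
  rintro ⟨P, h1, h2, h3⟩
  rcases lt_or_gt_of_ne huv with h | h
  · exact WhirlAux.main_lt u v hu hv h P h1 h2 h3
  · refine WhirlAux.main_lt v u hv hu h (fun i => (P i).reverse)
      (fun i => (h1 i).reverse) ?_ ?_
    · intro i j hij e he1 he2
      rw [SimpleGraph.Walk.edges_reverse, List.mem_reverse] at he1 he2
      exact h2 i j hij e he1 he2
    · intro i j
      rw [SimpleGraph.Walk.support_reverse, SimpleGraph.Walk.support_reverse]
      exact WhirlAux.compat_reverse (h3 i j) (h1 i).support_nodup (h1 j).support_nodup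
end

section
/- For every integer k and every pair of vertices u, v of the whirl graph, the whirl graph contains k pairwise edge-disjoint, pairwise order-compatible u–v paths. -/
open SimpleGraph

section Aux
open List


theorem step3 {α : Type*} [DecidableEq α] {R : α → α → Prop}
    (hR : ∀ a b, R a b → R b a → False) (hirr : ∀ a, ¬ R a a)
    {l : List α} (hp : l.Pairwise R) {x y : α} (hx : x ∈ l) (hy : y ∈ l) :
    (l.idxOf x ≤ l.idxOf y ↔ ¬ R y x) := by
  rw [List.pairwise_iff_getElem] at hp
  have hxl := List.idxOf_lt_length_iff.mpr hx
  have hyl := List.idxOf_lt_length_iff.mpr hy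
  have hgx : l[l.idxOf x] = x := List.getElem_idxOf hxl
  have hgy : l[l.idxOf y] = y := List.getElem_idxOf hyl
  constructor
  · intro h hyx
    rcases lt_or_eq_of_le h with h | h
    · exact hR _ _ (hgx ▸ hgy ▸ hp _ _ hxl hyl h) hyx
    · have : x = y := (List.idxOf_inj hx).mp h
      exact hirr x (this ▸ hyx)
  · intro h
    by_contra hc
    push_neg at hc
    exact h (hgx ▸ hgy ▸ hp _ _ hyl hxl hc)

theorem pairwise_idx {α : Type*} [DecidableEq α] {M : List α} (h : M.Nodup) :
    M.Pairwise (fun a b => M.idxOf a < M.idxOf b) := by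
  rw [List.pairwise_iff_getElem]
  intro i j hi hj hij
  rwa [List.Nodup.idxOf_getElem h, List.Nodup.idxOf_getElem h]

theorem idx_le_iff {α : Type*} [DecidableEq α] {M l : List α} (hM : M.Nodup) (hl : l <+ M)
    {x y : α} (hx : x ∈ l) (hy : y ∈ l) :
    (l.idxOf x ≤ l.idxOf y ↔ M.idxOf x ≤ M.idxOf y) := by
  have hR : ∀ a b : α, M.idxOf a < M.idxOf b → M.idxOf b < M.idxOf a → False := by
    intro a b h1 h2; omega
  have hirr : ∀ a : α, ¬ M.idxOf a < M.idxOf a := by intro a; omega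
  have h1 := step3 hR hirr ((pairwise_idx hM).sublist hl) hx hy
  have h2 := step3 hR hirr (pairwise_idx hM) (hl.subset hx) (hl.subset hy)
  rw [h1, h2]

theorem compat_of_sublists {α : Type*} [DecidableEq α] {M l₁ l₂ : List α} (hM : M.Nodup)
    (h1 : l₁ <+ M) (h2 : l₂ <+ M) : ListCompat l₁ l₂ := by
  intro x y hx1 hy1 hx2 hy2
  rw [idx_le_iff hM h1 hx1 hy1, idx_le_iff hM h2 hx2 hy2]


/-- the vertex `i / 3^n`. -/
def vtx (n i : ℕ) : ℚ := (i : ℚ) / 3 ^ n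

theorem vtx_lt {n i j : ℕ} (h : i < j) : vtx n i < vtx n j := by
  unfold vtx
  have h3 : (0:ℚ) < 3 ^ n := by positivity
  exact div_lt_div_of_pos_right (by exact_mod_cast h) h3

theorem vtx_le {n i j : ℕ} (h : i ≤ j) : vtx n i ≤ vtx n j := by
  rcases eq_or_lt_of_le h with rfl | h
  · exact le_refl _
  · exact le_of_lt (vtx_lt h)

theorem vtx_inj {n i j : ℕ} (h : vtx n i = vtx n j) : i = j := by
  rcases lt_trichotomy i j with h' | h' | h'
  · exact absurd h (ne_of_lt (vtx_lt h'))
  · exact h'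
  · exact absurd h.symm (ne_of_lt (vtx_lt h'))

theorem vtx_ne {n i j : ℕ} (h : i ≠ j) : vtx n i ≠ vtx n j := fun hc => h (vtx_inj hc)

theorem vtx_scale (n i : ℕ) : vtx (n+1) (3*i) = vtx n i := by
  unfold vtx
  have h3 : (3:ℚ) ^ n ≠ 0 := by positivity
  have h3' : (3:ℚ) ^ (n+1) ≠ 0 := by positivity
  field_simp
  push_cast
  ring

/-- key cross-level comparison -/
theorem vtx_eq_level {n n' i i' : ℕ} (h : vtx n i = vtx n' i') (hi : ¬ 3 ∣ i) : n ≤ n' := by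
  unfold vtx at h
  have h3 : (3:ℚ) ^ n ≠ 0 := by positivity
  have h3' : (3:ℚ) ^ n' ≠ 0 := by positivity
  rw [div_eq_div_iff (by positivity) (by positivity)] at h
  have hnat : i * 3 ^ n' = i' * 3 ^ n := by exact_mod_cast h
  have hdvd : 3 ^ n ∣ i * 3 ^ n' := hnat ▸ Dvd.intro_left _ rfl
  have hcop : Nat.Coprime (3 ^ n) i :=
    Nat.Coprime.pow_left _ ((Nat.prime_three.coprime_iff_not_dvd).mpr hi)
  have : 3 ^ n ∣ 3 ^ n' := (Nat.Coprime.dvd_of_dvd_mul_left hcop hdvd)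
  exact (Nat.pow_dvd_pow_iff_le_right (by norm_num : (1:ℕ) < 3)).mp this

theorem mem_En_top {m j : ℕ} (hj : j < 3 ^ m) :
    s(vtx (m+1) (3*j), vtx (m+1) (3*j+2)) ∈ En (m+1) ∧
    s(vtx (m+1) (3*j+1), vtx (m+1) (3*j+2)) ∈ En (m+1) ∧
    s(vtx (m+1) (3*j+1), vtx (m+1) (3*j+3)) ∈ En (m+1) := by
  refine ⟨⟨j, by simpa using hj, Or.inl ?_⟩, ⟨j, by simpa using hj, Or.inr (Or.inl ?_)⟩,
    ⟨j, by simpa using hj, Or.inr (Or.inr ?_)⟩⟩ <;> simp [vtx] <;> push_cast <;> ring_nf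

theorem whirl_adj_of_En {n : ℕ} (hn : 1 ≤ n) {a b : ℚ} (hab : a ≠ b)
    (h : s(a, b) ∈ En n) : whirl.Adj a b := by
  rw [whirl, fromEdgeSet_adj]
  exact ⟨Set.mem_biUnion hn h, hab⟩

/-- edges at level `> m` lying inside the cell `[j/3^m, (j+1)/3^m]`. -/
def EnIn (m j : ℕ) : Set (Sym2 ℚ) :=
  {e | ∃ n, m < n ∧ e ∈ En n ∧ ∀ x ∈ e, vtx m j ≤ x ∧ x ≤ vtx m (j+1)}

theorem en_elim {n : ℕ} (hn : 1 ≤ n) {e : Sym2 ℚ} (he : e ∈ En n) :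
    ∃ i j : ℕ, i < j ∧ j ≤ 3 ^ n ∧ e = s(vtx n i, vtx n j) ∧ (¬ 3 ∣ i ∨ ¬ 3 ∣ j) := by
  have h3 : 3 * 3 ^ (n-1) = 3 ^ n := by
    rw [← pow_succ']; congr 1; omega
  obtain ⟨k, hk, h | h | h⟩ := he
  · exact ⟨3*k, 3*k+2, by omega, by omega, h, Or.inr (by omega)⟩
  · exact ⟨3*k+1, 3*k+2, by omega, by omega, h, Or.inl (by omega)⟩
  · exact ⟨3*k+1, 3*k+3, by omega, by omega, h, Or.inl (by omega)⟩

theorem En_level_unique {n n' : ℕ} (hn : 1 ≤ n) (hn' : 1 ≤ n') {e : Sym2 ℚ}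
    (h : e ∈ En n) (h' : e ∈ En n') : n = n' := by
  obtain ⟨i, j, hij, hj, rfl, hcop⟩ := en_elim hn h
  obtain ⟨i', j', hij', hj', heq, hcop'⟩ := en_elim hn' h'
  have key : ∀ a b : ℕ, vtx n a = vtx n' b → ¬ 3 ∣ a → n ≤ n' := fun a b hab ha =>
    vtx_eq_level hab ha
  have key' : ∀ a b : ℕ, vtx n a = vtx n' b → ¬ 3 ∣ b → n' ≤ n := fun a b hab hb =>
    vtx_eq_level hab.symm hb
  rw [Sym2.eq_iff] at heq
  rcases heq with ⟨h1, h2⟩ | ⟨h1, h2⟩ <;> rcases hcop with hc | hc <;> rcases hcop' with hc' | hc'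
  all_goals
    first
    | exact le_antisymm (key _ _ (by assumption) hc) (key' _ _ (by assumption) hc')
    | exact le_antisymm (key _ _ (by assumption) hc) (key' _ _ (by rw [(by assumption : vtx n' i' = vtx n j)] ) hc')

theorem EnIn_cell_unique {m j j' : ℕ} {e : Sym2 ℚ} (h : e ∈ EnIn m j) (h' : e ∈ EnIn m j') :
    j = j' := by
  obtain ⟨n, hmn, hen, hbd⟩ := h
  obtain ⟨n', hmn', hen', hbd'⟩ := h'
  obtain ⟨a, b, hab, -, rfl, -⟩ := en_elim (by omega) hen
  by_contra hne
  have hane : vtx n a ≠ vtx n b := vtx_ne (by omega)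
  have ha := hbd (vtx n a) (by simp)
  have hb := hbd (vtx n b) (by simp)
  have ha' := hbd' (vtx n a) (by simp)
  have hb' := hbd' (vtx n b) (by simp)
  rcases Nat.lt_or_ge j j' with hlt | hge
  · have hmid : vtx m (j+1) ≤ vtx m j' := vtx_le (by omega)
    have h1 : vtx n a = vtx m j' := le_antisymm (by linarith [ha.2, hmid]) ha'.1
    have h2 : vtx n b = vtx m j' := le_antisymm (by linarith [hb.2, hmid]) hb'.1
    exact hane (h1.trans h2.symm)
  · have hlt' : j' < j := by omega
    have hmid : vtx m (j'+1) ≤ vtx m j := vtx_le (by omega)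
    have h1 : vtx n a = vtx m j := le_antisymm (by linarith [ha'.2, hmid]) ha.1
    have h2 : vtx n b = vtx m j := le_antisymm (by linarith [hb'.2, hmid]) hb.1
    exact hane (h1.trans h2.symm)

theorem top_not_EnIn {m c : ℕ} {e : Sym2 ℚ} (he : e ∈ En (m+1)) (h : e ∈ EnIn (m+1) c) :
    False := by
  obtain ⟨n, hmn, hen, -⟩ := h
  exact absurd (En_level_unique (by omega) (by omega) he hen) (by omega)

theorem EnIn_mono {m j c : ℕ} (h1 : 3*j ≤ c) (h2 : c ≤ 3*j+2) {e : Sym2 ℚ}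
    (h : e ∈ EnIn (m+1) c) : e ∈ EnIn m j := by
  obtain ⟨n, hmn, hen, hbd⟩ := h
  refine ⟨n, by omega, hen, fun x hx => ?_⟩
  have ha : vtx m j ≤ vtx (m+1) c := by
    rw [← vtx_scale m j]; exact vtx_le (by omega)
  have hb : vtx (m+1) (c+1) ≤ vtx m (j+1) := by
    rw [← vtx_scale m (j+1)]; exact vtx_le (by omega)
  exact ⟨ha.trans (hbd x hx).1, (hbd x hx).2.trans hb⟩

theorem top_mem_EnIn {m j a b : ℕ} (hj : j < 3^m) (ha : 3*j ≤ a) (hb : b ≤ 3*j+3)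
    (he : s(vtx (m+1) a, vtx (m+1) b) ∈ En (m+1)) (hab : a ≤ b) :
    s(vtx (m+1) a, vtx (m+1) b) ∈ EnIn m j := by
  refine ⟨m+1, by omega, he, fun x hx => ?_⟩
  rw [Sym2.mem_iff] at hx
  have hL : ∀ c : ℕ, 3*j ≤ c → c ≤ 3*j+3 → vtx m j ≤ vtx (m+1) c ∧ vtx (m+1) c ≤ vtx m (j+1) := by
    intro c h1 h2
    constructor
    · rw [← vtx_scale m j]; exact vtx_le h1
    · rw [← vtx_scale m (j+1)]; exact vtx_le (by omega)
  rcases hx with rfl | rfl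
  · exact hL a ha (by omega)
  · exact hL b (by omega) hb

theorem support_tail_sublist {u v : ℚ} {p : whirl.Walk u v} {rest : List ℚ}
    (h : p.support <+ u :: rest) : p.support.tail <+ rest := by
  rw [Walk.support_eq_cons p] at h
  exact List.cons_sublist_cons.mp h

theorem nodup_glue {A B C : List ℚ} {p q : ℚ} (hA : A.Nodup) (hB : B.Nodup) (hC : C.Nodup)
    (hAp : ∀ x ∈ A, x < p) (hpB : ∀ x ∈ B, p < x) (hBq : ∀ x ∈ B, x < q) (hpq : p < q)
    (hqC : ∀ x ∈ C, q < x) : (A ++ (p :: (B ++ (q :: C)))).Nodup := by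
  have h1 : (q :: C).Nodup := by
    rw [List.nodup_cons]
    exact ⟨fun hc => absurd (hqC q hc) (lt_irrefl q), hC⟩
  have h2 : (B ++ q :: C).Nodup := by
    rw [List.nodup_append]
    refine ⟨hB, h1, fun x hx y hx' hxy => ?_⟩
    subst hxy
    rcases List.mem_cons.mp hx' with rfl | hx'
    · exact absurd (hBq x hx) (lt_irrefl x)
    · exact absurd ((hBq x hx).trans (hqC x hx')) (lt_irrefl x)
  have h3 : (p :: (B ++ (q :: C))).Nodup := by
    rw [List.nodup_cons]
    refine ⟨fun hc => ?_, h2⟩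
    rcases List.mem_append.mp hc with hx | hx
    · exact absurd (hpB p hx) (lt_irrefl p)
    · rcases List.mem_cons.mp hx with h | h
      · exact absurd (h ▸ hpq) (lt_irrefl p)
      · exact absurd (hpq.trans (hqC p h)) (lt_irrefl p)
  rw [List.nodup_append]
  refine ⟨hA, h3, fun x hx y hx' hxy => ?_⟩
  subst hxy
  have hxp := hAp x hx
  rcases List.mem_cons.mp hx' with rfl | hx'
  · exact absurd hxp (lt_irrefl x)
  · rcases List.mem_append.mp hx' with h | h
    · exact absurd (hxp.trans (hpB x h)) (lt_irrefl x)
    · rcases List.mem_cons.mp h with rfl | h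
      · exact absurd (hxp.trans hpq) (lt_irrefl x)
      · exact absurd (hxp.trans (hpq.trans (hqC x h))) (lt_irrefl x)

theorem pow3succ (m : ℕ) : 3 ^ (m+1) = 3 * 3 ^ m := by ring

theorem main : ∀ (f m j : ℕ), j < 3 ^ m →
    ∃ (Q : Fin f → whirl.Walk (vtx m j) (vtx m (j+1))) (I : List ℚ),
      I.Nodup ∧ (∀ x ∈ I, vtx m j < x ∧ x < vtx m (j+1)) ∧
      (∀ i, (Q i).support <+ vtx m j :: I ++ [vtx m (j+1)]) ∧
      (∀ i, ∀ e ∈ (Q i).edges, e ∈ EnIn m j) ∧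
      (∀ i i', i ≠ i' → WalkEdgeDisjoint (Q i) (Q i')) := by
  intro f
  induction f with
  | zero =>
    intro m j _
    exact ⟨fun i => i.elim0, [], by simp, by simp, fun i => i.elim0, fun i => i.elim0,
      fun i => i.elim0⟩
  | succ f ih =>
    match f, ih with
    | 0, _ =>
      intro m j hj
      have eL : vtx (m+1) (3*j) = vtx m j := vtx_scale m j
      have eR : vtx (m+1) (3*j+3) = vtx m (j+1) := by
        rw [show 3*j+3 = 3*(j+1) by ring, vtx_scale]
      obtain ⟨he1, he2, he3⟩ := mem_En_top hj
      have ha1 : whirl.Adj (vtx (m+1) (3*j)) (vtx (m+1) (3*j+2)) :=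
        whirl_adj_of_En (by omega) (vtx_ne (by omega)) he1
      have ha2 : whirl.Adj (vtx (m+1) (3*j+2)) (vtx (m+1) (3*j+1)) :=
        (whirl_adj_of_En (by omega) (vtx_ne (by omega)) he2).symm
      have ha3 : whirl.Adj (vtx (m+1) (3*j+1)) (vtx (m+1) (3*j+3)) :=
        whirl_adj_of_En (by omega) (vtx_ne (by omega)) he3
      refine ⟨fun _ => ((Walk.cons ha1 (Walk.cons ha2 (Walk.cons ha3 Walk.nil))).copy eL eR),
        [vtx (m+1) (3*j+2), vtx (m+1) (3*j+1)], ?_, ?_, ?_, ?_, ?_⟩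
      · simp [vtx_ne (show 3*j+2 ≠ 3*j+1 by omega)]
      · intro x hx
        rw [← eL, ← eR]
        obtain rfl | rfl := by simpa using hx
        · exact ⟨vtx_lt (by omega), vtx_lt (by omega)⟩
        · exact ⟨vtx_lt (by omega), vtx_lt (by omega)⟩
      · intro i
        simp only [Walk.support_copy, Walk.support_cons, Walk.support_nil]
        rw [← eL, ← eR]
        simp
      · intro i e he
        simp only [Walk.edges_copy, Walk.edges_cons, Walk.edges_nil, List.mem_cons,
          List.not_mem_nil, or_false] at he
        rcases he with rfl | rfl | rfl
        · exact top_mem_EnIn hj (by omega) (by omega) he1 (by omega)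
        · rw [Sym2.eq_swap]
          exact top_mem_EnIn hj (by omega) (by omega) he2 (by omega)
        · exact top_mem_EnIn hj (by omega) (by omega) he3 (by omega)
      · intro i i' hii'
        exact absurd (Fin.ext (by omega)) hii'
    | (f'+1), ih =>
      intro m j hj
      have h3m := pow3succ m
      obtain ⟨Q0, I0, h0nd, h0bd, h0sup, h0e, h0dj⟩ := ih (m+1) (3*j) (by omega)
      obtain ⟨Q1, I1, h1nd, h1bd, h1sup, h1e, h1dj⟩ := ih (m+1) (3*j+1) (by omega)
      obtain ⟨Q2, I2, h2nd, h2bd, h2sup, h2e, h2dj⟩ := ih (m+1) (3*j+2) (by omega)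
      have e2 : vtx (m+1) (3*j+1+1) = vtx (m+1) (3*j+2) := congrArg _ (by omega)
      have e3 : vtx (m+1) (3*j+2+1) = vtx (m+1) (3*j+3) := congrArg _ (by omega)
      have eL : vtx (m+1) (3*j) = vtx m j := vtx_scale m j
      have eR : vtx (m+1) (3*j+3) = vtx m (j+1) := by
        rw [show 3*j+3 = 3*(j+1) by ring, vtx_scale]
      obtain ⟨he1, he2', he3'⟩ := mem_En_top hj
      have htopB : s(vtx (m+1) (3*j), vtx (m+1) (3*j+1+1)) ∈ En (m+1) := by rw [e2]; exact he1
      have htopC : s(vtx (m+1) (3*j+1), vtx (m+1) (3*j+3)) ∈ En (m+1) := he3'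
      have ha1 : whirl.Adj (vtx (m+1) (3*j)) (vtx (m+1) (3*j+1+1)) :=
        whirl_adj_of_En (by omega) (vtx_ne (by omega)) htopB
      have ha3 : whirl.Adj (vtx (m+1) (3*j+1)) (vtx (m+1) (3*j+3)) :=
        whirl_adj_of_En (by omega) (vtx_ne (by omega)) htopC
      -- transported sublist hypothesis for Q2
      have hlist2 : (vtx (m+1) (3*j+2) :: I2) ++ [vtx (m+1) (3*j+2+1)]
          = (vtx (m+1) (3*j+1+1) :: I2) ++ [vtx (m+1) (3*j+3)] := by rw [e2, e3]
      have h2sup' : ∀ t, (Q2 t).support <+ (vtx (m+1) (3*j+1+1) :: I2) ++ [vtx (m+1) (3*j+3)] :=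
        fun t => hlist2 ▸ h2sup t
      refine ⟨fun i =>
        (if (i:ℕ) = 0 then Walk.cons ha1 ((Q2 (Fin.last f')).copy e2.symm e3)
         else if (i:ℕ) = 1 then (Q0 (Fin.last f')).append (Walk.cons ha3 Walk.nil)
         else (((Q0 ⟨(i:ℕ)-2, by have := i.isLt; omega⟩).append
                (Q1 ⟨(i:ℕ)-2, by have := i.isLt; omega⟩)).append
                ((Q2 ⟨(i:ℕ)-2, by have := i.isLt; omega⟩).copy e2.symm e3))).copy eL eR,
        I0 ++ (vtx (m+1) (3*j+1) :: (I1 ++ (vtx (m+1) (3*j+1+1) :: I2))), ?_, ?_, ?_, ?_, ?_⟩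
      · -- Nodup
        refine nodup_glue h0nd h1nd h2nd (fun x hx => (h0bd x hx).2) (fun x hx => (h1bd x hx).1)
          (fun x hx => (h1bd x hx).2) (vtx_lt (by omega)) (fun x hx => ?_)
        rw [e2]; exact (h2bd x hx).1
      · -- bounds
        intro x hx
        rw [← eL, ← eR]
        simp only [List.mem_append, List.mem_cons] at hx
        rcases hx with hx | rfl | hx | rfl | hx
        · exact ⟨(h0bd x hx).1, (h0bd x hx).2.trans (vtx_lt (by omega))⟩
        · exact ⟨vtx_lt (by omega), vtx_lt (by omega)⟩
        · exact ⟨(vtx_lt (by omega)).trans (h1bd x hx).1, (h1bd x hx).2.trans (vtx_lt (by omega))⟩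
        · exact ⟨vtx_lt (by omega), vtx_lt (by omega)⟩
        · exact ⟨(vtx_lt (by omega)).trans ((by rw [e2]; exact (h2bd x hx).1) :
            vtx (m+1) (3*j+1+1) < x), e3 ▸ (h2bd x hx).2⟩
      · -- supports
        intro i
        simp only [Walk.support_copy]
        rw [← eL, ← eR]
        by_cases hi0 : (i:ℕ) = 0
        · rw [if_pos hi0]
          rw [Walk.support_cons, Walk.support_copy]
          have hmB : (vtx (m+1) (3*j) :: (I0 ++ (vtx (m+1) (3*j+1) :: (I1 ++ (vtx (m+1) (3*j+1+1) :: I2))))) ++ [vtx (m+1) (3*j+3)]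
              = vtx (m+1) (3*j) :: ((I0 ++ (vtx (m+1) (3*j+1) :: I1)) ++ ((vtx (m+1) (3*j+1+1) :: I2) ++ [vtx (m+1) (3*j+3)])) := by
            simp
          rw [hmB]
          exact List.Sublist.cons₂ _ ((h2sup' (Fin.last f')).trans (List.sublist_append_right _ _))
        · rw [if_neg hi0]
          by_cases hi1 : (i:ℕ) = 1
          · rw [if_pos hi1]
            rw [Walk.support_append, Walk.support_cons, Walk.support_nil]
            have hmC : (vtx (m+1) (3*j) :: (I0 ++ (vtx (m+1) (3*j+1) :: (I1 ++ (vtx (m+1) (3*j+1+1) :: I2))))) ++ [vtx (m+1) (3*j+3)]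
                = ((vtx (m+1) (3*j) :: I0) ++ [vtx (m+1) (3*j+1)]) ++ ((I1 ++ (vtx (m+1) (3*j+1+1) :: I2)) ++ [vtx (m+1) (3*j+3)]) := by
              simp
            rw [hmC]
            exact List.Sublist.append (h0sup _) (List.sublist_append_right _ _)
          · rw [if_neg hi1]
            simp only [Walk.support_append, Walk.support_copy]
            have hmD : (vtx (m+1) (3*j) :: (I0 ++ (vtx (m+1) (3*j+1) :: (I1 ++ (vtx (m+1) (3*j+1+1) :: I2))))) ++ [vtx (m+1) (3*j+3)]
                = (((vtx (m+1) (3*j) :: I0) ++ [vtx (m+1) (3*j+1)]) ++ (I1 ++ [vtx (m+1) (3*j+1+1)])) ++ (I2 ++ [vtx (m+1) (3*j+3)]) := by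
              simp
            rw [hmD]
            refine List.Sublist.append (List.Sublist.append (h0sup _) ?_) ?_
            · exact support_tail_sublist (h1sup _)
            · exact support_tail_sublist (h2sup' _)
      · -- edges
        intro i e he
        simp only [Walk.edges_copy, Walk.edges_append, Walk.edges_cons, Walk.edges_nil,
          List.mem_append, List.mem_cons, List.not_mem_nil, or_false] at he
        by_cases hi0 : (i:ℕ) = 0
        · rw [if_pos hi0] at he
          simp only [Walk.edges_cons, Walk.edges_copy, List.mem_cons] at he
          rcases he with rfl | he
          · exact top_mem_EnIn hj (by omega) (by omega) htopB (by omega)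
          · exact EnIn_mono (by omega) (by omega) (h2e _ _ he)
        · rw [if_neg hi0] at he
          by_cases hi1 : (i:ℕ) = 1
          · rw [if_pos hi1] at he
            simp only [Walk.edges_append, Walk.edges_cons, Walk.edges_nil, List.mem_append,
              List.mem_cons, List.not_mem_nil, or_false] at he
            rcases he with he | rfl
            · exact EnIn_mono (by omega) (by omega) (h0e _ _ he)
            · exact top_mem_EnIn hj (by omega) (by omega) htopC (by omega)
          · rw [if_neg hi1] at he
            simp only [Walk.edges_append, Walk.edges_copy, List.mem_append] at he
            rcases he with (he | he) | he
            · exact EnIn_mono (by omega) (by omega) (h0e _ _ he)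
            · exact EnIn_mono (by omega) (by omega) (h1e _ _ he)
            · exact EnIn_mono (by omega) (by omega) (h2e _ _ he)
      · -- pairwise edge-disjoint
        intro i i' hne e he he'
        have hvne : (i:ℕ) ≠ (i':ℕ) := fun hc => hne (Fin.ext hc)
        have hdiff : ∀ (a b : ℕ), a ≠ b → ∀ e : Sym2 ℚ,
            e ∈ EnIn (m+1) a → e ∈ EnIn (m+1) b → False :=
          fun a b hab e h h' => hab (EnIn_cell_unique h h')
        have htopne : s(vtx (m+1) (3*j), vtx (m+1) (3*j+1+1))
            ≠ s(vtx (m+1) (3*j+1), vtx (m+1) (3*j+3)) := by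
          intro hcontra
          rw [Sym2.eq_iff] at hcontra
          rcases hcontra with ⟨h1, -⟩ | ⟨h1, -⟩
          · exact absurd (vtx_inj h1) (by omega)
          · exact absurd (vtx_inj h1) (by omega)
        simp only [Walk.edges_copy] at he he'
        have hvlt := i.isLt
        have hvlt' := i'.isLt
        by_cases hi0 : (i:ℕ) = 0
        · rw [if_pos hi0] at he
          simp only [Walk.edges_cons, Walk.edges_copy, List.mem_cons] at he
          by_cases hi0' : (i':ℕ) = 0
          · omega
          · rw [if_neg hi0'] at he'
            by_cases hi1' : (i':ℕ) = 1
            · -- B vs C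
              rw [if_pos hi1'] at he'
              simp only [Walk.edges_append, Walk.edges_cons, Walk.edges_nil, List.mem_append,
                List.mem_cons, List.not_mem_nil, or_false] at he'
              rcases he with rfl | he <;> rcases he' with he' | he'
              · exact top_not_EnIn htopB (h0e _ _ he')
              · exact htopne he'
              · exact hdiff _ _ (by omega) e (h2e _ _ he) (h0e _ _ he')
              · exact top_not_EnIn (he'.symm ▸ htopC) (h2e _ _ he)
            · -- B vs D
              rw [if_neg hi1'] at he'
              simp only [Walk.edges_append, Walk.edges_copy, List.mem_append] at he'
              rcases he with rfl | he <;> rcases he' with (he' | he') | he'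
              · exact top_not_EnIn htopB (h0e _ _ he')
              · exact top_not_EnIn htopB (h1e _ _ he')
              · exact top_not_EnIn htopB (h2e _ _ he')
              · exact hdiff _ _ (by omega) e (h2e _ _ he) (h0e _ _ he')
              · exact hdiff _ _ (by omega) e (h2e _ _ he) (h1e _ _ he')
              · exact h2dj _ _ (Fin.ne_of_val_ne (show (f' : ℕ) ≠ (i':ℕ)-2 by omega)) e he he'
        · rw [if_neg hi0] at he
          by_cases hi1 : (i:ℕ) = 1
          · rw [if_pos hi1] at he
            simp only [Walk.edges_append, Walk.edges_cons, Walk.edges_nil, List.mem_append,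
              List.mem_cons, List.not_mem_nil, or_false] at he
            by_cases hi0' : (i':ℕ) = 0
            · -- C vs B
              rw [if_pos hi0'] at he'
              simp only [Walk.edges_cons, Walk.edges_copy, List.mem_cons] at he'
              rcases he with he | rfl <;> rcases he' with he' | he'
              · exact top_not_EnIn (he'.symm ▸ htopB) (h0e _ _ he)
              · exact hdiff _ _ (by omega) e (h0e _ _ he) (h2e _ _ he')
              · exact htopne he'.symm
              · exact top_not_EnIn htopC (h2e _ _ he')
            · rw [if_neg hi0'] at he'
              by_cases hi1' : (i':ℕ) = 1
              · omega
              · -- C vs D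
                rw [if_neg hi1'] at he'
                simp only [Walk.edges_append, Walk.edges_copy, List.mem_append] at he'
                rcases he with he | rfl <;> rcases he' with (he' | he') | he'
                · exact h0dj _ _ (Fin.ne_of_val_ne (show (f' : ℕ) ≠ (i':ℕ)-2 by omega)) e he he'
                · exact hdiff _ _ (by omega) e (h0e _ _ he) (h1e _ _ he')
                · exact hdiff _ _ (by omega) e (h0e _ _ he) (h2e _ _ he')
                · exact top_not_EnIn htopC (h0e _ _ he')
                · exact top_not_EnIn htopC (h1e _ _ he')
                · exact top_not_EnIn htopC (h2e _ _ he')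
          · -- i is D
            rw [if_neg hi1] at he
            simp only [Walk.edges_append, Walk.edges_copy, List.mem_append] at he
            by_cases hi0' : (i':ℕ) = 0
            · -- D vs B
              rw [if_pos hi0'] at he'
              simp only [Walk.edges_cons, Walk.edges_copy, List.mem_cons] at he'
              rcases he with (he | he) | he <;> rcases he' with rfl | he'
              · exact top_not_EnIn htopB (h0e _ _ he)
              · exact hdiff _ _ (by omega) e (h0e _ _ he) (h2e _ _ he')
              · exact top_not_EnIn htopB (h1e _ _ he)
              · exact hdiff _ _ (by omega) e (h1e _ _ he) (h2e _ _ he')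
              · exact top_not_EnIn htopB (h2e _ _ he)
              · exact h2dj _ _ (Fin.ne_of_val_ne (show (i:ℕ)-2 ≠ (f' : ℕ) by omega)) e he he'
            · rw [if_neg hi0'] at he'
              by_cases hi1' : (i':ℕ) = 1
              · -- D vs C
                rw [if_pos hi1'] at he'
                simp only [Walk.edges_append, Walk.edges_cons, Walk.edges_nil, List.mem_append,
                  List.mem_cons, List.not_mem_nil, or_false] at he'
                rcases he with (he | he) | he <;> rcases he' with he' | rfl
                · exact h0dj _ _ (Fin.ne_of_val_ne (show (i:ℕ)-2 ≠ (f' : ℕ) by omega)) e he he'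
                · exact top_not_EnIn htopC (h0e _ _ he)
                · exact hdiff _ _ (by omega) e (h1e _ _ he) (h0e _ _ he')
                · exact top_not_EnIn htopC (h1e _ _ he)
                · exact hdiff _ _ (by omega) e (h2e _ _ he) (h0e _ _ he')
                · exact top_not_EnIn htopC (h2e _ _ he)
              · -- D vs D
                rw [if_neg hi1'] at he'
                simp only [Walk.edges_append, Walk.edges_copy, List.mem_append] at he'
                have tne : ((i:ℕ)-2 : ℕ) ≠ ((i':ℕ)-2 : ℕ) := by omega
                rcases he with (he | he) | he <;> rcases he' with (he' | he') | he'
                · exact h0dj _ _ (Fin.ne_of_val_ne tne) e he he'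
                · exact hdiff _ _ (by omega) e (h0e _ _ he) (h1e _ _ he')
                · exact hdiff _ _ (by omega) e (h0e _ _ he) (h2e _ _ he')
                · exact hdiff _ _ (by omega) e (h1e _ _ he) (h0e _ _ he')
                · exact h1dj _ _ (Fin.ne_of_val_ne tne) e he he'
                · exact hdiff _ _ (by omega) e (h1e _ _ he) (h2e _ _ he')
                · exact hdiff _ _ (by omega) e (h2e _ _ he) (h0e _ _ he')
                · exact hdiff _ _ (by omega) e (h2e _ _ he) (h1e _ _ he')
                · exact h2dj _ _ (Fin.ne_of_val_ne tne) e he he'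



theorem nodup_glue2 {A B : List ℚ} {p : ℚ} (hA : A.Nodup) (hB : B.Nodup)
    (hAp : ∀ x ∈ A, x < p) (hpB : ∀ x ∈ B, p < x) : (A ++ (p :: B)).Nodup := by
  rw [List.nodup_append]
  refine ⟨hA, ?_, fun x hx y hx' hxy => ?_⟩
  · rw [List.nodup_cons]
    exact ⟨fun hc => absurd (hpB p hc) (lt_irrefl p), hB⟩
  · subst hxy
    rcases List.mem_cons.mp hx' with rfl | hx'
    · exact absurd (hAp x hx) (lt_irrefl x)
    · exact absurd ((hAp x hx).trans (hpB x hx')) (lt_irrefl x)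

theorem chain (k : ℕ) : ∀ (c n a : ℕ), 1 ≤ c → a + c ≤ 3 ^ n →
    ∃ (Q : Fin k → whirl.Walk (vtx n a) (vtx n (a+c))) (I : List ℚ),
      I.Nodup ∧ (∀ x ∈ I, vtx n a < x ∧ x < vtx n (a+c)) ∧
      (∀ i, (Q i).support <+ vtx n a :: I ++ [vtx n (a+c)]) ∧
      (∀ i, ∀ e ∈ (Q i).edges, ∃ c', a ≤ c' ∧ c' < a + c ∧ e ∈ EnIn n c') ∧
      (∀ i i', i ≠ i' → WalkEdgeDisjoint (Q i) (Q i')) := by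
  intro c
  induction c with
  | zero => intro n a h; omega
  | succ c ihc =>
    intro n a _ hb
    by_cases hc : c = 0
    · subst hc
      obtain ⟨Q, I, hnd, hbd, hsup, he, hdj⟩ := main k n a (by omega)
      exact ⟨Q, I, hnd, hbd, hsup, fun i e hee => ⟨a, le_refl a, by omega, he i e hee⟩, hdj⟩
    · obtain ⟨Q, I, hnd, hbd, hsup, he, hdj⟩ := ihc n a (by omega) (by omega)
      obtain ⟨Q', I', hnd', hbd', hsup', he', hdj'⟩ := main k n (a+c) (by omega)
      have eE : vtx n (a+c+1) = vtx n (a+(c+1)) := congrArg _ (by omega)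
      have hlist : (I' ++ [vtx n (a+c+1)]) = (I' ++ [vtx n (a+(c+1))]) := by rw [eE]
      refine ⟨fun i => (Q i).append ((Q' i).copy rfl eE), I ++ (vtx n (a+c) :: I'),
        ?_, ?_, ?_, ?_, ?_⟩
      · exact nodup_glue2 hnd hnd' (fun x hx => (hbd x hx).2) (fun x hx => (hbd' x hx).1)
      · intro x hx
        rcases List.mem_append.mp hx with hx | hx
        · exact ⟨(hbd x hx).1, (hbd x hx).2.trans (vtx_lt (by omega))⟩
        · rcases List.mem_cons.mp hx with rfl | hx
          · exact ⟨vtx_lt (by omega), vtx_lt (by omega)⟩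
          · exact ⟨(vtx_lt (by omega)).trans (hbd' x hx).1, eE ▸ (hbd' x hx).2⟩
      · intro i
        simp only [Walk.support_append, Walk.support_copy]
        have hm : (vtx n a :: (I ++ (vtx n (a+c) :: I'))) ++ [vtx n (a+(c+1))]
            = ((vtx n a :: I) ++ [vtx n (a+c)]) ++ (I' ++ [vtx n (a+(c+1))]) := by simp
        rw [hm]
        exact List.Sublist.append (hsup i) (hlist ▸ support_tail_sublist (hsup' i))
      · intro i e hee
        rcases List.mem_append.mp (by simpa only [Walk.edges_append, Walk.edges_copy] using hee)
          with h | h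
        · obtain ⟨c', h1, h2, h3⟩ := he i e h
          exact ⟨c', h1, by omega, h3⟩
        · exact ⟨a+c, by omega, by omega, he' i e h⟩
      · intro i i' hne e hee hee'
        simp only [Walk.edges_append, Walk.edges_copy, List.mem_append] at hee hee'
        rcases hee with h | h <;> rcases hee' with h' | h'
        · exact hdj i i' hne e h h'
        · obtain ⟨c', h1, h2, h3⟩ := he i e h
          exact absurd (EnIn_cell_unique h3 (he' i' e h')) (by omega)
        · obtain ⟨c', h1, h2, h3⟩ := he i' e h'
          exact absurd (EnIn_cell_unique (he' i e h) h3) (by omega)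
        · exact hdj' i i' hne e h h'

theorem assemble (k N a b : ℕ) (hab : a < b) (hb : b ≤ 3 ^ N) :
    ∃ (Q : Fin k → whirl.Walk (vtx N a) (vtx N b)) (M : List ℚ), M.Nodup ∧
      (∀ i, (Q i).support <+ M) ∧
      (∀ i i', i ≠ i' → WalkEdgeDisjoint (Q i) (Q i')) := by
  obtain ⟨Q, I, hnd, hbd, hsup, -, hdj⟩ := chain k (b-a) N a (by omega) (by omega)
  have eE : vtx N (a+(b-a)) = vtx N b := congrArg _ (by omega)
  have hlist : vtx N a :: I ++ [vtx N (a+(b-a))] = vtx N a :: I ++ [vtx N b] := by rw [eE]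
  refine ⟨fun i => (Q i).copy rfl eE, vtx N a :: I ++ [vtx N b], ?_, ?_, ?_⟩
  · rw [List.cons_append, List.nodup_cons]
    constructor
    · intro hc
      rcases List.mem_append.mp hc with hx | hx
      · exact absurd (hbd _ hx).1 (lt_irrefl _)
      · rcases List.mem_cons.mp hx with h | h
        · exact absurd (h ▸ vtx_lt (show a < b by omega)) (lt_irrefl _)
        · simp at h
    · exact nodup_glue2 hnd List.nodup_nil
        (fun x hx => eE ▸ (hbd x hx).2) (by simp)
  · intro i
    simp only [Walk.support_copy]
    exact hlist ▸ hsup i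
  · intro i i' hne e hee hee'
    simp only [Walk.edges_copy] at hee hee'
    exact hdj i i' hne e hee hee'

theorem vtx_common (p q i : ℕ) : vtx (p+q) (i * 3^q) = vtx p i := by
  unfold vtx
  have h1 : ((3:ℚ))^p ≠ 0 := by positivity
  rw [pow_add]
  push_cast
  field_simp


end Aux

/-- For every `k` and every pair of vertices `u`, `v` of the whirl graph, there are `k`
pairwise edge-disjoint, pairwise order-compatible `u`–`v` paths. -/
theorem stmt9 (k : ℕ) (u v : ℚ) (hu : u ∈ whirlV) (hv : v ∈ whirlV) :
    ∃ P : Fin k → whirl.Walk u v, (∀ i, (P i).IsPath) ∧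
      (∀ i j, i ≠ j → WalkEdgeDisjoint (P i) (P j)) ∧
      (∀ i j, ListCompat (P i).support (P j).support) := by
  simp only [whirlV, Set.mem_iUnion, Vn, Set.mem_setOf_eq] at hu hv
  obtain ⟨p, -, i, hile, rfl⟩ := hu
  obtain ⟨q, -, i', hile', rfl⟩ := hv
  have E1 : vtx (p+q) (i * 3^q) = (i : ℚ) / 3 ^ p := vtx_common p q i
  have E2 : vtx (p+q) (i' * 3^p) = (i' : ℚ) / 3 ^ q := by
    rw [show p+q = q+p by ring]; exact vtx_common q p i'
  have hbound1 : i * 3^q ≤ 3 ^ (p+q) := by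
    rw [pow_add]; exact Nat.mul_le_mul_right _ hile
  have hbound2 : i' * 3^p ≤ 3 ^ (p+q) := by
    rw [pow_add, mul_comm (3^p)]; exact Nat.mul_le_mul_right _ hile'
  rcases Nat.lt_trichotomy (i * 3^q) (i' * 3^p) with h | h | h
  · obtain ⟨Q, M, hM, hsup, hdj⟩ := assemble k (p+q) _ _ h hbound2
    refine ⟨fun t => (Q t).copy E1 E2, fun t => ?_, fun t t' hne => ?_, fun t t' => ?_⟩
    · exact Walk.IsPath.mk' (by rw [Walk.support_copy]; exact (hsup t).nodup hM)
    · intro e hee hee'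
      simp only [Walk.edges_copy] at hee hee'
      exact hdj t t' hne e hee hee'
    · simp only [Walk.support_copy]
      exact compat_of_sublists hM (hsup t) (hsup t')
  · have huv : (i : ℚ) / 3 ^ p = (i' : ℚ) / 3 ^ q := by rw [← E1, ← E2, h]
    refine ⟨fun _ => Walk.nil.copy rfl huv, fun t => ?_, fun t t' hne e hee => ?_, fun t t' => ?_⟩
    · exact Walk.IsPath.mk' (by simp)
    · simp [Walk.edges_copy] at hee
    · simp only [Walk.support_copy, Walk.support_nil]
      exact compat_of_sublists (List.nodup_singleton _) (List.Sublist.refl _) (List.Sublist.refl _)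
  · obtain ⟨Q, M, hM, hsup, hdj⟩ := assemble k (p+q) _ _ h hbound1
    refine ⟨fun t => ((Q t).copy E2 E1).reverse, fun t => ?_, fun t t' hne => ?_, fun t t' => ?_⟩
    · exact (Walk.IsPath.mk' (by rw [Walk.support_copy]; exact (hsup t).nodup hM)).reverse
    · intro e hee hee'
      rw [Walk.edges_reverse, List.mem_reverse, Walk.edges_copy] at hee hee'
      exact hdj t t' hne e hee hee'
    · simp only [Walk.support_reverse, Walk.support_copy]
      exact compat_of_sublists (List.nodup_reverse.mpr hM) (hsup t).reverse (hsup t').reverse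
end
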